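/- arXiv:2109.05734 — 7 statements merged into one kernel-verified Lean document; each statement's English description precedes it below -/
import Mathlib

section
/- Let f ∈ ℤ[X] be a nonconstant monic polynomial, let m be a positive integer, and let p be a prime. If there exists a ∈ ℤ such that p ∣ f(a) and the multiplicative order of a modulo p equals m, then p divides the resultant Res(f, Φ_m) and p ≡ 1 (mod m), where Φ_m is the m-th cyclotomic polynomial. -/
open Polynomial

private lemma eval_charpoly_aux {k : ℕ} {K : Type*} [CommRing K]
    (M : Matrix (Fin k) (Fin k) K) (t : K) :
    M.charpoly.eval t = (t • (1 : Matrix (Fin k) (Fin k) K) - M).det := by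
  rw [Matrix.charpoly, ← coe_evalRingHom, RingHom.map_det]
  congr 1
  ext i j
  by_cases h : i = j
  · subst h
    simp [Matrix.charmatrix_apply_eq, Matrix.one_apply]
  · simp [Matrix.charmatrix_apply_ne _ _ _ h, Matrix.one_apply, h]

private lemma pow_mulVec_aux {k : ℕ} {K : Type*} [CommRing K]
    (A : Matrix (Fin k) (Fin k) K) (v : Fin k → K) (t : K)
    (h : A.mulVec v = t • v) : ∀ i : ℕ, (A ^ i).mulVec v = t ^ i • v := by
  intro i
  induction i with
  | zero => simp [Matrix.one_mulVec]
  | succ i ih =>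
    rw [pow_succ, pow_succ, ← Matrix.mulVec_mulVec, h, Matrix.mulVec_smul, ih,
      smul_smul, mul_comm]

private lemma aeval_mulVec_aux {k : ℕ} {K : Type*} [CommRing K]
    (A : Matrix (Fin k) (Fin k) K) (v : Fin k → K) (t : K)
    (h : A.mulVec v = t • v) (q : Polynomial ℤ) :
    (aeval A q).mulVec v = aeval t q • v := by
  induction q using Polynomial.induction_on' with
  | add p q hp hq => rw [map_add, Matrix.add_mulVec, hp, hq, map_add, add_smul]
  | monomial i c =>
    rw [aeval_monomial, aeval_monomial, Algebra.algebraMap_eq_smul_one, smul_mul_assoc, one_mul,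
      Matrix.smul_mulVec, pow_mulVec_aux A v t h i, ← smul_assoc, eq_intCast, zsmul_eq_mul]

/-- For `f ∈ ℤ[X]` nonconstant monic, `m ≥ 1`, `p` prime: if there is `a ∈ ℤ`
with `p ∣ f(a)` and `ord_p(a) = m`, then `p` divides `Res(f, Φ_m)` and `p ≡ 1 (mod m)`.
Since `f` is monic, the resultant `Res(f, Φ_m)` is the integer `R` whose value is the
product of `Φ_m` over the complex roots of `f` (with multiplicity). -/
theorem stmt1 (f : Polynomial ℤ) (hf : f.Monic) (hdeg : 0 < f.natDegree)
    (m : ℕ) (hm : 0 < m) (p : ℕ) (hp : p.Prime)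
    (a : ℤ) (hpa : (p : ℤ) ∣ f.eval a) (hord : orderOf (a : ZMod p) = m)
    (R : ℤ) (hR : (R : ℂ) =
      (((f.map (Int.castRingHom ℂ)).roots).map
        (fun α => (Polynomial.cyclotomic m ℂ).eval α)).prod) :
    (p : ℤ) ∣ R ∧ p ≡ 1 [MOD m] := by
  haveI : Fact p.Prime := ⟨hp⟩
  have hpow : (a : ZMod p) ^ m = 1 := by rw [← hord]; exact pow_orderOf_eq_one _
  have ha0 : (a : ZMod p) ≠ 0 := by
    intro h0
    rw [h0, zero_pow hm.ne'] at hpow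
    exact zero_ne_one hpow
  have hprim : IsPrimitiveRoot (a : ZMod p) m :=
    ⟨hpow, fun l hl => hord ▸ orderOf_dvd_of_pow_eq_one hl⟩
  -- Part 2 : p ≡ 1 mod m
  have hunit : IsUnit (a : ZMod p) := isUnit_iff_ne_zero.mpr ha0
  have hordu : orderOf hunit.unit = m := by
    rw [← hord, ← orderOf_units, IsUnit.unit_spec]
  have hdvd1 : m ∣ p - 1 := by
    rw [← hordu, ← ZMod.card_units p]
    exact orderOf_dvd_card
  have hmod : p ≡ 1 [MOD m] := ((Nat.modEq_iff_dvd' hp.one_lt.le).mpr hdvd1).symm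
  -- Setup : companion-like matrix
  set pb := AdjoinRoot.powerBasis' hf with hpbdef
  have hgen : pb.gen = AdjoinRoot.root f := rfl
  have hmin : f = minpoly ℤ pb.gen := by
    apply minpoly.unique' ℤ pb.gen hf
    · rw [hgen, AdjoinRoot.aeval_eq, AdjoinRoot.mk_eq_zero]
    · intro q hq
      rcases eq_or_ne q 0 with h0 | h0
      · exact Or.inl h0
      · refine Or.inr fun hz => ?_
        rw [hgen, AdjoinRoot.aeval_eq, AdjoinRoot.mk_eq_zero] at hz
        exact absurd (Polynomial.degree_le_of_dvd hz h0) (not_le.mpr hq)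
  set Cmat : Matrix (Fin pb.dim) (Fin pb.dim) ℤ :=
    Algebra.leftMulMatrix pb.basis pb.gen with hCmat
  have hchar : Cmat.charpoly = f := by
    rw [hCmat, charpoly_leftMulMatrix, ← hmin]
  have hdim : pb.dim = f.natDegree := rfl
  set Mmat := aeval Cmat (cyclotomic m ℤ) with hMmat
  -- divisibility: p ∣ det Mmat
  have hdvdM : (p : ℤ) ∣ Mmat.det := by
    set φ := Int.castRingHom (ZMod p) with hφ
    have h2 : Mmat.map φ = aeval (Cmat.map φ) (cyclotomic m ℤ) := by
      have h := Polynomial.aeval_algHom_apply (φ.mapMatrix.toIntAlgHom) Cmat (cyclotomic m ℤ)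
      exact h.symm
    set Cp := Cmat.map φ with hCp
    have hcharp : Cp.charpoly = f.map φ := by rw [hCp, Matrix.charpoly_map, hchar]
    have hdet0 : ((a : ZMod p) • (1 : Matrix (Fin pb.dim) (Fin pb.dim) (ZMod p)) - Cp).det = 0 := by
      rw [← eval_charpoly_aux, hcharp, eval_intCast_map]
      exact (ZMod.intCast_zmod_eq_zero_iff_dvd _ p).mpr hpa
    obtain ⟨v, hv0, hv⟩ := Matrix.exists_mulVec_eq_zero_iff.mpr hdet0
    have heig : Cp.mulVec v = (a : ZMod p) • v := by
      rw [Matrix.sub_mulVec, sub_eq_zero] at hv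
      rw [← hv, Matrix.smul_mulVec, Matrix.one_mulVec]
    have haev : aeval ((a : ℤ) : ZMod p) (cyclotomic m ℤ) = 0 := by
      have hroot := hprim.isRoot_cyclotomic hm
      rw [IsRoot.def] at hroot
      rw [aeval_def, eval₂_eq_eval_map, algebraMap_int_eq, map_cyclotomic_int]
      exact hroot
    have hM0 : (aeval Cp (cyclotomic m ℤ)).mulVec v = 0 := by
      rw [aeval_mulVec_aux Cp v _ heig, haev, zero_smul]
    have hdetp : (Mmat.map φ).det = 0 := by
      rw [h2]
      exact Matrix.exists_mulVec_eq_zero_iff.mp ⟨v, hv0, hM0⟩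
    have : ((Mmat.det : ℤ) : ZMod p) = 0 := by
      calc ((Mmat.det : ℤ) : ZMod p) = φ Mmat.det := rfl
        _ = (Mmat.map φ).det := RingHom.map_det φ Mmat
        _ = 0 := hdetp
    exact (ZMod.intCast_zmod_eq_zero_iff_dvd _ p).mp this
  -- complex side: R = det Mmat
  have hReq : R = Mmat.det := by
    apply Int.cast_injective (α := ℂ)
    rw [hR]
    set ψ := Int.castRingHom ℂ with hψ
    have h2 : Mmat.map ψ = aeval (Cmat.map ψ) (cyclotomic m ℤ) := by
      have h := Polynomial.aeval_algHom_apply (ψ.mapMatrix.toIntAlgHom) Cmat (cyclotomic m ℤ)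
      exact h.symm
    set CC := Cmat.map ψ with hCC
    have hcharC : CC.charpoly = f.map ψ := by rw [hCC, Matrix.charpoly_map, hchar]
    set fC := f.map ψ with hfCdef
    have hfCm : fC.Monic := hf.map ψ
    have hfsplit : fC = (fC.roots.map fun α => X - C α).prod :=
      (IsAlgClosed.splits _).eq_prod_roots_of_monic hfCm
    have hcardroots : Multiset.card fC.roots = f.natDegree := by
      rw [splits_iff_card_roots.mp (IsAlgClosed.splits _)]
      exact hf.natDegree_map ψ
    set ΦC := cyclotomic m ℂ with hΦC
    have hΦm : ΦC.Monic := cyclotomic.monic m ℂ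
    have hΦsplit : ΦC = (ΦC.roots.map fun β => X - C β).prod :=
      (IsAlgClosed.splits _).eq_prod_roots_of_monic hΦm
    have h3 : aeval CC (cyclotomic m ℤ) = aeval CC ΦC := by
      rw [hΦC, ← map_cyclotomic_int m ℂ, ← algebraMap_int_eq, aeval_map_algebraMap]
    obtain ⟨l, hl⟩ : ∃ l : List ℂ, (l : Multiset ℂ) = ΦC.roots :=
      ⟨ΦC.roots.toList, Multiset.coe_toList _⟩
    have hΦl : ΦC = (l.map fun β => X - C β).prod := by
      conv_lhs => rw [hΦsplit]
      rw [← hl, Multiset.map_coe, Multiset.prod_coe]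
    have h4 : (aeval CC ΦC).det = (ΦC.roots.map fun β => (CC - β • 1).det).prod := by
      rw [← hl, Multiset.map_coe, Multiset.prod_coe]
      conv_lhs => rw [hΦl]
      rw [map_list_prod (aeval CC), ← Matrix.coe_detMonoidHom, map_list_prod,
        List.map_map, List.map_map]
      congr 1
      apply List.map_congr_left
      intro β _
      simp [Function.comp, Algebra.algebraMap_eq_smul_one, Matrix.coe_detMonoidHom]
    have h5 : ∀ β : ℂ, (CC - β • 1).det = (-1) ^ f.natDegree * fC.eval β := by
      intro β
      have hneg : CC - β • 1 = -(β • (1 : Matrix (Fin pb.dim) (Fin pb.dim) ℂ) - CC) := by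
        rw [neg_sub]
      rw [hneg, Matrix.det_neg, ← eval_charpoly_aux, hcharC, Fintype.card_fin, hdim]
    have h6 : ∀ (g : ℂ[X]) (x : ℂ), g = (g.roots.map fun α => X - C α).prod →
        g.eval x = (g.roots.map fun α => x - α).prod := by
      intro g x hg
      conv_lhs => rw [hg]
      rw [eval_multiset_prod, Multiset.map_map]
      congr 1
      apply Multiset.map_congr rfl
      intro α _
      simp
    have h7 : ∀ β : ℂ, (-1) ^ f.natDegree * (fC.roots.map fun α => β - α).prod =
        (fC.roots.map fun α => α - β).prod := by
      intro β
      have : (fC.roots.map fun α => α - β) = (fC.roots.map fun α => β - α).map Neg.neg := by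
        rw [Multiset.map_map]
        apply Multiset.map_congr rfl
        intro α _
        simp
      rw [this, Multiset.prod_map_neg, Multiset.card_map, hcardroots]
    calc (fC.roots.map fun α => ΦC.eval α).prod
        = (fC.roots.map fun α => (ΦC.roots.map fun β => α - β).prod).prod := by
          congr 1
          apply Multiset.map_congr rfl
          intro α _
          exact h6 ΦC α hΦsplit
      _ = (ΦC.roots.map fun β => (fC.roots.map fun α => α - β).prod).prod := by
          rw [Multiset.prod_map_prod_map]
      _ = (ΦC.roots.map fun β => (-1) ^ f.natDegree * (fC.roots.map fun α => β - α).prod).prod := by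
          congr 1
          apply Multiset.map_congr rfl
          intro β _
          exact (h7 β).symm
      _ = (ΦC.roots.map fun β => (-1) ^ f.natDegree * fC.eval β).prod := by
          congr 1
          apply Multiset.map_congr rfl
          intro β _
          rw [h6 fC β hfsplit]
      _ = (ΦC.roots.map fun β => (CC - β • 1).det).prod := by
          congr 1
          apply Multiset.map_congr rfl
          intro β _
          exact (h5 β).symm
      _ = (aeval CC ΦC).det := h4.symm
      _ = (Mmat.map ψ).det := by rw [← h3, ← h2]
      _ = ψ Mmat.det := (RingHom.map_det ψ Mmat).symm
      _ = ((Mmat.det : ℤ) : ℂ) := rfl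
  exact ⟨hReq ▸ hdvdM, hmod⟩
end

section
/- Let f ∈ ℤ[X] be a nonconstant monic polynomial, let m be a positive integer, and let p be a prime. If p divides the resultant Res(f, Φ_m) and p ≡ 1 (mod m), then there exists a ∈ ℤ such that p ∣ f(a) and the multiplicative order of a modulo p equals m. -/
open Polynomial

/-- Enumerate a nodup multiset of known cardinality by an injective function. -/
lemma multiset_enum {K : Type*} [CommRing K] {n : ℕ} (s : Multiset K) (hnd : s.Nodup)
    (hcard : Multiset.card s = n) :
    ∃ ζ : Fin n → K, Function.Injective ζ ∧ (∀ k, ζ k ∈ s) ∧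
      ∀ g : K → K, ∏ k, g (ζ k) = (s.map g).prod := by
  classical
  let F : Finset K := ⟨s, hnd⟩
  have hF : F.card = n := hcard
  let e : Fin n ≃ F := (F.equivFin.trans (finCongr hF)).symm
  refine ⟨fun k => (e k : K), ?_, ?_, ?_⟩
  · intro a b hab
    exact e.injective (Subtype.ext hab)
  · intro k; exact (e k).2
  · intro g
    have h1 : ∏ k, g ((e k : K)) = ∏ x : F, g (x : K) := Equiv.prod_comp e (fun x : F => g (x : K))
    rw [h1, Finset.prod_coe_sort F (fun x => g x)]
    rfl

/-- Vandermonde: determinant of the "multiply by g mod q" matrix equals ∏ g(ζ k). -/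
lemma det_mulmod {K : Type*} [Field K] {n : ℕ} (hn : 0 < n) (q g : K[X]) (hq : q.Monic)
    (hdq : q.natDegree = n) (ζ : Fin n → K) (hinj : Function.Injective ζ)
    (hroot : ∀ k, q.eval (ζ k) = 0) :
    (Matrix.of fun i j : Fin n => ((g * X ^ (j : ℕ)) %ₘ q).coeff i).det
      = ∏ k, g.eval (ζ k) := by
  have hmod : ∀ r : K[X], (r %ₘ q).natDegree < n := by
    intro r
    by_cases h0 : r %ₘ q = 0
    · simpa [h0] using hn
    · rw [← hdq]
      exact natDegree_lt_natDegree h0 (degree_modByMonic_lt r hq)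
  have heval : ∀ (r : K[X]) (k : Fin n), (r %ₘ q).eval (ζ k) = r.eval (ζ k) := by
    intro r k
    rw [modByMonic_eq_sub_mul_div r q]
    simp [hroot k]
  set M := Matrix.of fun i j : Fin n => ((g * X ^ (j : ℕ)) %ₘ q).coeff i with hM
  have hVM : Matrix.vandermonde ζ * M
      = Matrix.diagonal (fun k => g.eval (ζ k)) * Matrix.vandermonde ζ := by
    ext k j
    rw [Matrix.mul_apply, Matrix.diagonal_mul]
    have h2 : ∑ i, Matrix.vandermonde ζ k i * M i j
        = ((g * X ^ (j : ℕ)) %ₘ q).eval (ζ k) := by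
      rw [eval_eq_sum_range' (hmod _) (ζ k), ← Fin.sum_univ_eq_sum_range]
      simp [Matrix.vandermonde, hM, mul_comm]
    rw [h2, heval, eval_mul, eval_pow, eval_X, Matrix.vandermonde]
    rfl
  have hdetV : (Matrix.vandermonde ζ).det ≠ 0 := by
    rw [Matrix.det_vandermonde]
    refine Finset.prod_ne_zero_iff.2 fun i _ => Finset.prod_ne_zero_iff.2 fun j hj => ?_
    exact sub_ne_zero.2 (fun h => (Finset.mem_Ioi.mp hj).ne' (hinj h))
  have hdet := congrArg Matrix.det hVM
  rw [Matrix.det_mul, Matrix.det_mul, Matrix.det_diagonal] at hdet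
  exact mul_right_cancel₀ hdetV (by rw [mul_comm M.det]; exact hdet)

/-- For `f ∈ ℤ[X]` nonconstant monic, `m ≥ 1`, `p` prime: if `p` divides
`Res(f, Φ_m)` and `p ≡ 1 (mod m)`, then there is `a ∈ ℤ` with `p ∣ f(a)` and `ord_p(a) = m`.
Since `f` is monic, the resultant `Res(f, Φ_m)` is the integer `R` whose value is the
product of `Φ_m` over the complex roots of `f` (with multiplicity). -/
theorem stmt2 (f : Polynomial ℤ) (hf : f.Monic) (hdeg : 0 < f.natDegree)
    (m : ℕ) (hm : 0 < m) (p : ℕ) (hp : p.Prime)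
    (R : ℤ) (hR : (R : ℂ) =
      (((f.map (Int.castRingHom ℂ)).roots).map
        (fun α => (Polynomial.cyclotomic m ℂ).eval α)).prod)
    (hdvd : (p : ℤ) ∣ R) (hcong : p ≡ 1 [MOD m]) :
    ∃ a : ℤ, (p : ℤ) ∣ f.eval a ∧ orderOf (a : ZMod p) = m := by
  classical
  set n := m.totient with hn_def
  have hn : 0 < n := Nat.totient_pos.mpr hm
  set d := f.natDegree with hd_def
  -- the integer matrix of multiplication by f modulo Φ_m
  set M : Matrix (Fin n) (Fin n) ℤ :=
    Matrix.of fun i j : Fin n => ((f * X ^ (j : ℕ)) %ₘ cyclotomic m ℤ).coeff i with hMdef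
  set N : ℤ := M.det with hNdef
  -- mapping the matrix along a ring hom
  have hmap : ∀ {S : Type} [CommRing S] (φ : ℤ →+* S),
      M.map φ = Matrix.of fun i j : Fin n =>
        (((f.map φ) * X ^ (j : ℕ)) %ₘ cyclotomic m S).coeff i := by
    intro S _ φ
    ext i j
    simp only [Matrix.map_apply, hMdef, Matrix.of_apply]
    rw [← coeff_map, Polynomial.map_modByMonic _ (cyclotomic.monic m ℤ),
      Polynomial.map_mul, Polynomial.map_pow, map_X, map_cyclotomic]
  ------------------------------------------------------------------
  -- COMPLEX SIDE : R = (-1)^(d*n) * N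
  ------------------------------------------------------------------
  have hRN : R = (-1) ^ (d * n) * N := by
    set φ := Int.castRingHom ℂ
    set fC := f.map φ with hfC
    set qC := cyclotomic m ℂ with hqC
    have hfCm : fC.Monic := hf.map φ
    have hqCm : qC.Monic := cyclotomic.monic m ℂ
    have hfCsp : fC.Splits := IsAlgClosed.splits fC
    have hqCsp : qC.Splits := IsAlgClosed.splits qC
    have hsep : qC.Separable := by
      refine Separable.of_dvd ?_ (cyclotomic.dvd_X_pow_sub_one m ℂ)
      have := separable_X_pow_sub_C (1 : ℂ) (by exact_mod_cast (Nat.cast_ne_zero (R := ℂ)).mpr hm.ne') one_ne_zero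
      simpa using this
    have hcardq : Multiset.card qC.roots = n := by
      rw [(splits_iff_card_roots).mp hqCsp, hqC, natDegree_cyclotomic]
    have hcardf : Multiset.card fC.roots = d := by
      rw [(splits_iff_card_roots).mp hfCsp, hfC]
      exact hf.natDegree_map φ
    obtain ⟨ζ, hinj, hmem, hprod⟩ := multiset_enum qC.roots (nodup_roots hsep) hcardq
    have hroot : ∀ k, qC.eval (ζ k) = 0 := fun k => isRoot_of_mem_roots (hmem k)
    have hdet : (M.map φ).det = ∏ k, fC.eval (ζ k) := by
      rw [hmap φ]
      exact det_mulmod hn qC fC hqCm (by rw [hqC, natDegree_cyclotomic]) ζ hinj hroot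
    have hNC : (N : ℂ) = ∏ k, fC.eval (ζ k) := by
      rw [← hdet, hNdef]
      exact RingHom.map_det φ M
    -- the product swap
    have hswap : (fC.roots.map fun α => qC.eval α).prod
        = (-1) ^ (d * n) * (qC.roots.map fun z => fC.eval z).prod := by
      have h1 : (fC.roots.map fun α => qC.eval α).prod
          = (fC.roots.map fun α => ((qC.roots.map fun z => α - z)).prod).prod := by
        congr 1
        exact Multiset.map_congr rfl fun α _ =>
          hqCsp.eval_eq_prod_roots_of_monic hqCm α
      have h2 : (qC.roots.map fun z => (fC.roots.map fun α => α - z).prod).prod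
          = (qC.roots.map fun z => (-1) ^ d * fC.eval z).prod := by
        refine congrArg _ (Multiset.map_congr rfl fun z _ => ?_)
        have : (fC.roots.map fun α => α - z) = (fC.roots.map fun α => z - α).map Neg.neg := by
          rw [Multiset.map_map]
          exact Multiset.map_congr rfl fun α _ => by simp
        rw [this, Multiset.prod_map_neg, Multiset.card_map, hcardf,
          hfCsp.eval_eq_prod_roots_of_monic hfCm z]
      rw [h1, Multiset.prod_map_prod_map, h2, Multiset.prod_map_mul]
      congr 1
      rw [Multiset.map_const', Multiset.prod_replicate, hcardq, ← pow_mul]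
    have : (R : ℂ) = ((-1) ^ (d * n) * N : ℤ) := by
      push_cast
      rw [hR, hswap, ← hprod fC.eval, ← hNC]
    exact_mod_cast this
  have hdvdN : (p : ℤ) ∣ N := by
    rcases Nat.even_or_odd (d * n) with he | ho
    · rwa [hRN, he.neg_one_pow, one_mul] at hdvd
    · rw [hRN, ho.neg_one_pow, neg_one_mul, dvd_neg] at hdvd
      exact hdvd
  ------------------------------------------------------------------
  -- MOD p SIDE
  ------------------------------------------------------------------
  haveI : Fact p.Prime := ⟨hp⟩
  have hp2 : 2 ≤ p := hp.two_le
  have hmdvd : m ∣ p - 1 := (Nat.modEq_iff_dvd' (by omega)).mp hcong.symm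
  have hmle : m ≤ p - 1 := Nat.le_of_dvd (by omega) hmdvd
  have hpm : ¬ p ∣ m := fun h => by
    have := Nat.le_of_dvd hm h
    omega
  haveI hnez : NeZero ((m : ZMod p)) := ⟨by
    rw [Ne, ZMod.natCast_eq_zero_iff]
    exact hpm⟩
  -- primitive m-th root of unity in ZMod p
  obtain ⟨g, hg⟩ := IsCyclic.exists_monoid_generator (α := (ZMod p)ˣ)
  have hg' : ∀ x : (ZMod p)ˣ, x ∈ Subgroup.zpowers g := by
    intro x
    obtain ⟨k, hk⟩ := hg x
    exact ⟨k, by simpa using hk⟩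
  have hgord : orderOf g = p - 1 := by
    rw [orderOf_eq_card_of_forall_mem_zpowers hg', Nat.card_eq_fintype_card, ZMod.card_units]
  have hkne : (p - 1) / m ≠ 0 := by
    have := Nat.div_pos hmle (by omega)
    omega
  have huord : orderOf (g ^ ((p - 1) / m)) = m := by
    rw [orderOf_pow' _ hkne, hgord, Nat.gcd_eq_right (Nat.div_dvd_of_dvd hmdvd),
      Nat.div_div_self hmdvd (by omega)]
  have hprim : IsPrimitiveRoot ((g ^ ((p - 1) / m) : (ZMod p)ˣ) : ZMod p) m := by
    have h := IsPrimitiveRoot.orderOf ((g ^ ((p - 1) / m) : (ZMod p)ˣ) : ZMod p)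
    rwa [orderOf_units, huord] at h
  -- Φ_m splits over ZMod p with distinct roots
  set qP := cyclotomic m (ZMod p) with hqP
  have hXm_monic : (X ^ m - C (1 : ZMod p)).Monic := monic_X_pow_sub_C _ hm.ne'
  have hXmsp : (X ^ m - C (1 : ZMod p)).Splits := by
    rw [splits_iff_card_roots, natDegree_X_pow_sub_C]
    have := hprim.card_nthRoots (1 : ZMod p)
    rw [if_pos ⟨1, one_pow m⟩] at this
    exact this
  have hqPdvd : qP ∣ X ^ m - C (1 : ZMod p) := by
    simpa using cyclotomic.dvd_X_pow_sub_one m (ZMod p)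
  have hqPsp : qP.Splits :=
    hXmsp.of_dvd hXm_monic.ne_zero hqPdvd
  have hsepP : qP.Separable := by
    refine Separable.of_dvd ?_ hqPdvd
    exact separable_X_pow_sub_C (1 : ZMod p) hnez.out one_ne_zero
  have hcardP : Multiset.card qP.roots = n := by
    rw [(splits_iff_card_roots).mp hqPsp, hqP, natDegree_cyclotomic]
  obtain ⟨ζ, hinj, hmem, -⟩ := multiset_enum qP.roots (nodup_roots hsepP) hcardP
  have hroot : ∀ k, qP.eval (ζ k) = 0 := fun k => isRoot_of_mem_roots (hmem k)
  set ψ := Int.castRingHom (ZMod p)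
  have hdetP : (M.map ψ).det = ∏ k, (f.map ψ).eval (ζ k) := by
    rw [hmap ψ]
    exact det_mulmod hn qP (f.map ψ) (cyclotomic.monic m _)
      (by rw [hqP, natDegree_cyclotomic]) ζ hinj hroot
  have hzero : (∏ k, (f.map ψ).eval (ζ k)) = 0 := by
    rw [← hdetP]
    have h := RingHom.map_det ψ M
    rw [show (ψ.mapMatrix M : Matrix (Fin n) (Fin n) (ZMod p)) = M.map ⇑ψ from rfl] at h
    rw [← h]
    show ((N : ℤ) : ZMod p) = 0
    rw [ZMod.intCast_zmod_eq_zero_iff_dvd]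
    exact_mod_cast hdvdN
  obtain ⟨k0, -, hk0⟩ := Finset.prod_eq_zero_iff.mp hzero
  set a : ZMod p := ζ k0 with ha
  have haprim : IsPrimitiveRoot a m := isRoot_cyclotomic_iff.mp (hroot k0)
  refine ⟨(a.val : ℤ), ?_, ?_⟩
  · rw [← ZMod.intCast_zmod_eq_zero_iff_dvd]
    have : (((a.val : ℤ) : ZMod p)) = a := by
      push_cast
      exact ZMod.natCast_rightInverse a
    calc ((f.eval (a.val : ℤ) : ℤ) : ZMod p) = (f.map ψ).eval (((a.val : ℤ) : ZMod p)) :=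
          (eval_intCast_map ψ f _).symm
      _ = (f.map ψ).eval a := by rw [this]
      _ = 0 := hk0
  · have : (((a.val : ℤ) : ZMod p)) = a := by
      push_cast
      exact ZMod.natCast_rightInverse a
    rw [this]
    exact haprim.eq_orderOf.symm
end

section
/- For every positive integer m with 4 ∤ m, the identity Φ_m(X)·Φ_m(−X) = (−1)^{φ(m)} · Φ_{m/gcd(m,2)}(X²) holds in ℤ[X], where Φ_n denotes the n-th cyclotomic polynomial and φ is Euler's totient function. -/
open Polynomial

lemma aux_comp_neg (n : ℕ) (hn : Odd n) :
    (cyclotomic n ℤ).comp (-X) = C ((-1 : ℤ) ^ n.totient) * cyclotomic (2 * n) ℤ := by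
  have hpos : 0 < n := hn.pos
  rcases eq_or_lt_of_le (show 1 ≤ n from hpos) with h1 | h1
  · have hn1 : n = 1 := by omega
    subst hn1
    norm_num [cyclotomic_one, cyclotomic_two, sub_comp, map_neg]
    ring
  · have h3 : 2 < n := by rcases hn with ⟨k, hk⟩; omega
    have hev : Even n.totient := Nat.totient_even h3
    have hC : ((-1 : ℤ) ^ n.totient) = 1 := hev.neg_one_pow
    rw [hC, map_one, one_mul]
    set ζ := Complex.exp (2 * Real.pi * Complex.I / n) with hζdef
    have hζ : IsPrimitiveRoot ζ n := Complex.isPrimitiveRoot_exp n hpos.ne'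
    have hneg : IsPrimitiveRoot (-ζ) (2 * n) := by
      convert IsPrimitiveRoot.orderOf (-ζ)
      rw [neg_eq_neg_one_mul, (Commute.all _ _).orderOf_mul_eq_mul_orderOf_of_coprime]
      · simp [hζ.eq_orderOf]
      · simp [← hζ.eq_orderOf, hn]
    have h2npos : 0 < 2 * n := by omega
    have hmin : cyclotomic (2 * n) ℤ = minpoly ℤ (-ζ) := cyclotomic_eq_minpoly hneg h2npos
    have hint : IsIntegral ℤ (-ζ) := hneg.isIntegral h2npos
    have haev : aeval (-ζ) ((cyclotomic n ℤ).comp (-X)) = 0 := by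
      rw [aeval_comp]
      simp only [map_neg, aeval_X, neg_neg]
      have hroot : IsRoot (cyclotomic n ℂ) ζ := hζ.isRoot_cyclotomic hpos
      rw [aeval_def, ← eval_map, map_cyclotomic]
      exact hroot
    have hdvd : cyclotomic (2 * n) ℤ ∣ (cyclotomic n ℤ).comp (-X) := by
      rw [hmin]
      exact minpoly.isIntegrallyClosed_dvd hint haev
    have hmon : ((cyclotomic n ℤ).comp (-X)).Monic := by
      unfold Polynomial.Monic
      rw [leadingCoeff_comp (by simp)]
      simp [(cyclotomic.monic n ℤ).leadingCoeff, natDegree_cyclotomic, hev.neg_one_pow,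
        leadingCoeff_neg]
    have hdeg : ((cyclotomic n ℤ).comp (-X)).natDegree ≤ (cyclotomic (2 * n) ℤ).natDegree := by
      rw [natDegree_comp, natDegree_cyclotomic, natDegree_cyclotomic,
        Nat.totient_mul (Nat.coprime_two_left.mpr hn), Nat.totient_two]
      simp
    exact (eq_of_monic_of_dvd_of_natDegree_le (cyclotomic.monic _ ℤ) hmon hdvd hdeg)

/-- For every positive integer `m` with `4 ∤ m`,
`Φ_m(X) · Φ_m(−X) = (−1)^{φ(m)} · Φ_{m/gcd(m,2)}(X²)` in `ℤ[X]`. -/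
theorem stmt3 (m : ℕ) (hm : 0 < m) (h4 : ¬ (4 ∣ m)) :
    (Polynomial.cyclotomic m ℤ) * (Polynomial.cyclotomic m ℤ).comp (-X) =
      C ((-1 : ℤ) ^ Nat.totient m) *
        (Polynomial.cyclotomic (m / Nat.gcd m 2) ℤ).comp (X ^ 2) := by
  rcases Nat.even_or_odd m with he | ho
  · -- m even, m = 2k with k odd
    obtain ⟨k, hk⟩ := he
    have hkodd : Odd k := by
      rcases Nat.even_or_odd k with ⟨j, hj⟩ | h
      · exact absurd ⟨j, by omega⟩ h4
      · exact h
    have hgcd : m.gcd 2 = 2 := Nat.gcd_eq_right (by omega)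
    have hdiv : m / m.gcd 2 = k := by rw [hgcd]; omega
    have hm2k : m = 2 * k := by omega
    have htot : m.totient = k.totient := by
      rw [hm2k, Nat.totient_mul (Nat.coprime_two_left.mpr hkodd), Nat.totient_two,
        one_mul]
    have haux := aux_comp_neg k hkodd
    have hexp : (cyclotomic k ℤ).comp (X ^ 2) = cyclotomic (2 * k) ℤ * cyclotomic k ℤ := by
      rw [← expand_eq_comp_X_pow, cyclotomic_expand_eq_cyclotomic_mul Nat.prime_two
        (by rcases hkodd with ⟨j, hj⟩; omega), mul_comm k 2]
    have hcyc2k : cyclotomic (2 * k) ℤ = C ((-1 : ℤ) ^ k.totient) * (cyclotomic k ℤ).comp (-X) := by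
      rw [haux, ← mul_assoc, ← C_mul, ← pow_add,
        Even.neg_one_pow ⟨k.totient, rfl⟩, map_one, one_mul]
    have hcompneg : (cyclotomic (2 * k) ℤ).comp (-X)
        = C ((-1 : ℤ) ^ k.totient) * cyclotomic k ℤ := by
      rw [hcyc2k, mul_comp, C_comp, comp_assoc]
      simp
    rw [hdiv, htot, hm2k, hexp, hcompneg, hcyc2k]
    ring
  · -- m odd
    have hgcd : m.gcd 2 = 1 := ho.coprime_two_right
    have hdiv : m / m.gcd 2 = m := by rw [hgcd]; omega
    have hexp : (cyclotomic m ℤ).comp (X ^ 2) = cyclotomic (2 * m) ℤ * cyclotomic m ℤ := by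
      rw [← expand_eq_comp_X_pow, cyclotomic_expand_eq_cyclotomic_mul Nat.prime_two
        (by rcases ho with ⟨j, hj⟩; omega), mul_comm m 2]
    rw [hdiv, hexp, aux_comp_neg m ho]
    ring
end

section
/- Let γ, δ be nonzero complex numbers such that γδ and (γ+δ)² are coprime nonzero integers and γ/δ is not a root of unity. Then for every integer n ≥ 3, the value Φ_n(γ, δ) := Φ_n(γ/δ)·δ^{φ(n)} is a rational integer, where Φ_n is the n-th cyclotomic polynomial. -/
open Polynomial

/-- If `γ, δ` form a Lehmer pair (`γδ` and `(γ+δ)²` are nonzero coprime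
integers and `γ/δ` is not a root of unity), then for every `n ≥ 3` the homogenized
cyclotomic value `Φ_n(γ, δ) = Φ_n(γ/δ) · δ^{φ(n)}` is a rational integer. -/
theorem stmt5 (γ δ : ℂ) (A B : ℤ) (hA : (A : ℂ) = γ * δ) (hA0 : A ≠ 0)
    (hB : (B : ℂ) = (γ + δ) ^ 2) (hB0 : B ≠ 0) (hcop : IsCoprime A B)
    (hru : ∀ k : ℕ, 0 < k → (γ / δ) ^ k ≠ 1)
    (n : ℕ) (hn : 3 ≤ n) :
    ∃ z : ℤ, (Polynomial.cyclotomic n ℂ).eval (γ / δ) * δ ^ Nat.totient n = (z : ℂ) := by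
  have hn0 : n ≠ 0 := by omega
  have hn1 : 1 < n := by omega
  have hn2 : 2 < n := by omega
  have hδ : δ ≠ 0 := by
    rintro rfl; apply hA0
    have : (A : ℂ) = 0 := by rw [hA]; ring
    exact_mod_cast this
  have hγ : γ ≠ 0 := by
    rintro rfl; apply hA0
    have : (A : ℂ) = 0 := by rw [hA]; ring
    exact_mod_cast this
  set φ := Nat.totient n with hφ
  have hφeven : Even φ := Nat.totient_even hn2
  set S := primitiveRoots n ℂ with hS
  have hcard : S.card = φ := Complex.card_primitiveRoots n
  obtain ⟨ζ₀, hζ₀⟩ : ∃ ζ : ℂ, IsPrimitiveRoot ζ n := ⟨_, Complex.isPrimitiveRoot_exp n hn0⟩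
  have hprod : cyclotomic n ℂ = ∏ ζ ∈ S, (X - C ζ) :=
    cyclotomic_eq_prod_X_sub_primitiveRoots hζ₀
  -- reindexing by inverse
  have hreindex : ∀ f : ℂ → ℂ, ∏ ζ ∈ S, f ζ = ∏ ζ ∈ S, f ζ⁻¹ := by
    intro f
    refine (Finset.prod_nbij' (fun ζ => ζ⁻¹) (fun ζ => ζ⁻¹) ?_ ?_ ?_ ?_ ?_).symm
    · intro a ha
      rw [hS, mem_primitiveRoots (by omega)] at ha ⊢
      exact ha.inv
    · intro a ha
      rw [hS, mem_primitiveRoots (by omega)] at ha ⊢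
      exact ha.inv
    · intro a _; exact inv_inv a
    · intro a _; exact inv_inv a
    · intro a _; rfl
  have hone : ∏ ζ ∈ S, (-ζ) = 1 := by
    have h0 : (cyclotomic n ℂ).eval 0 = 1 := by
      rw [← coeff_zero_eq_eval_zero]; exact cyclotomic_coeff_zero ℂ hn1
    rw [hprod, eval_prod] at h0
    simpa using h0
  -- product forms
  have hF : (cyclotomic n ℂ).eval (γ / δ) * δ ^ φ = ∏ ζ ∈ S, (γ - ζ * δ) := by
    rw [hprod, eval_prod, ← hcard, ← Finset.prod_const, ← Finset.prod_mul_distrib]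
    refine Finset.prod_congr rfl fun ζ _ => ?_
    simp only [eval_sub, eval_X, eval_C]
    field_simp
  have hG : (cyclotomic n ℂ).eval (δ / γ) * γ ^ φ = ∏ ζ ∈ S, (δ - ζ * γ) := by
    rw [hprod, eval_prod, ← hcard, ← Finset.prod_const, ← Finset.prod_mul_distrib]
    refine Finset.prod_congr rfl fun ζ _ => ?_
    simp only [eval_sub, eval_X, eval_C]
    field_simp
  -- palindromy at evaluation level
  have hFG : ∏ ζ ∈ S, (γ - ζ * δ) = ∏ ζ ∈ S, (δ - ζ * γ) := by
    have h1 : ∏ ζ ∈ S, (γ - ζ * δ) = ∏ ζ ∈ S, (γ - ζ⁻¹ * δ) := hreindex _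
    have h2 : ∀ ζ ∈ S, γ - ζ⁻¹ * δ = (-ζ⁻¹) * (δ - ζ * γ) := by
      intro ζ hζ
      have hζ0 : ζ ≠ 0 := by
        rw [hS, mem_primitiveRoots (by omega)] at hζ
        exact hζ.ne_zero hn0
      field_simp
      ring
    have h3 : ∏ ζ ∈ S, (-ζ⁻¹) = 1 := by
      rw [← hreindex (fun ζ => -ζ)]; exact hone
    rw [h1, Finset.prod_congr rfl h2, Finset.prod_mul_distrib, h3, one_mul]
  -- sum forms
  set c : ℕ → ℤ := fun k => (cyclotomic n ℤ).coeff k with hc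
  have hcoeff : ∀ k, (cyclotomic n ℂ).coeff k = ((c k : ℤ) : ℂ) := by
    intro k
    rw [hc, ← map_cyclotomic_int n ℂ, coeff_map]
    simp
  have hdeg : (cyclotomic n ℂ).natDegree = φ := natDegree_cyclotomic n ℂ
  have hFsum : (cyclotomic n ℂ).eval (γ / δ) * δ ^ φ
      = ∑ k ∈ Finset.range (φ + 1), (c k : ℂ) * (γ ^ k * δ ^ (φ - k)) := by
    rw [eval_eq_sum_range' (n := φ + 1) (by rw [hdeg]; omega), Finset.sum_mul]
    refine Finset.sum_congr rfl fun k hk => ?_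
    rw [Finset.mem_range] at hk
    rw [hcoeff k, div_pow, pow_sub₀ δ hδ (by omega)]
    first
      | (field_simp; ring)
      | field_simp
  have hGsum : (cyclotomic n ℂ).eval (δ / γ) * γ ^ φ
      = ∑ k ∈ Finset.range (φ + 1), (c k : ℂ) * (γ ^ (φ - k) * δ ^ k) := by
    rw [eval_eq_sum_range' (n := φ + 1) (by rw [hdeg]; omega), Finset.sum_mul]
    refine Finset.sum_congr rfl fun k hk => ?_
    rw [Finset.mem_range] at hk
    rw [hcoeff k, div_pow, pow_sub₀ γ hγ (by omega)]
    first
      | (field_simp; ring)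
      | field_simp
  -- integrality of even power sums
  have hT : ∀ m : ℕ, ∃ z : ℤ, (z : ℂ) = γ ^ (2 * m) + δ ^ (2 * m) := by
    intro m
    induction m using Nat.strong_induction_on with
    | _ m ih =>
      match m with
      | 0 => exact ⟨2, by norm_num⟩
      | 1 =>
        refine ⟨B - 2 * A, ?_⟩
        push_cast
        rw [hA, hB]; ring
      | (m + 2) =>
        obtain ⟨z1, hz1⟩ := ih (m + 1) (by omega)
        obtain ⟨z0, hz0⟩ := ih m (by omega)
        refine ⟨(B - 2 * A) * z1 - A ^ 2 * z0, ?_⟩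
        push_cast
        rw [hz1, hz0, hA, hB,
          show 2 * (m + 2) = 2 * m + 4 by ring, show 2 * (m + 1) = 2 * m + 2 by ring]
        ring
  -- the paired terms are integers
  have hpair0 : ∀ a b : ℕ, a ≤ b → (a + b) % 2 = 0 →
      ∃ z : ℤ, (z : ℂ) = γ ^ a * δ ^ b + γ ^ b * δ ^ a := by
    intro a b hab hpar
    obtain ⟨m, hm⟩ : ∃ m, b = a + 2 * m := ⟨(b - a) / 2, by omega⟩
    obtain ⟨t, ht⟩ := hT m
    refine ⟨A ^ a * t, ?_⟩
    push_cast
    rw [ht, hA, hm]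
    ring
  have hpair : ∀ a b : ℕ, (a + b) % 2 = 0 →
      ∃ z : ℤ, (z : ℂ) = γ ^ a * δ ^ b + γ ^ b * δ ^ a := by
    intro a b hpar
    rcases le_total a b with h | h
    · exact hpair0 a b h hpar
    · obtain ⟨z, hz⟩ := hpair0 b a h (by omega)
      exact ⟨z, by rw [hz]; ring⟩
  -- 2F is an integer
  set F := (cyclotomic n ℂ).eval (γ / δ) * δ ^ φ with hFdef
  have h2F : ∃ w : ℤ, (w : ℂ) = F + F := by
    have hFG' : F + F = ∑ k ∈ Finset.range (φ + 1),
        (c k : ℂ) * (γ ^ k * δ ^ (φ - k) + γ ^ (φ - k) * δ ^ k) := by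
      have hFsum2 : F = ∑ k ∈ Finset.range (φ + 1), (c k : ℂ) * (γ ^ (φ - k) * δ ^ k) := by
        rw [hF, hFG, ← hG, hGsum]
      nth_rewrite 2 [hFsum2]
      rw [hFsum, ← Finset.sum_add_distrib]
      refine Finset.sum_congr rfl fun k hk => ?_
      ring
    have : F + F ∈ (Int.castRingHom ℂ).range := by
      rw [hFG']
      refine Subring.sum_mem _ fun k hk => ?_
      rw [Finset.mem_range] at hk
      refine Subring.mul_mem _ ⟨c k, rfl⟩ ?_
      obtain ⟨z, hz⟩ := hpair k (φ - k) (by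
        obtain ⟨r, hr⟩ := hφeven
        omega)
      exact ⟨z, hz⟩
    obtain ⟨w, hw⟩ := this
    exact ⟨w, hw⟩
  obtain ⟨w, hw⟩ := h2F
  -- F is an algebraic integer
  have hquartic : ∀ x : ℂ, x * (γ + δ - x) = γ * δ →
      IsIntegral ℤ x := by
    intro x hx
    refine ⟨X ^ 4 + C (2 * A - B) * X ^ 2 + C (A ^ 2), ?_, ?_⟩
    · monicity!
    · simp only [eval₂_add, eval₂_mul, eval₂_C, eval₂_X_pow, eval₂_pow, eval₂_X]
      simp only [algebraMap_int_eq, eq_intCast]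
      push_cast
      rw [hA, hB]
      linear_combination (-(x ^ 2 + γ * δ + (γ + δ) * x)) * hx
  have hγint : IsIntegral ℤ γ := hquartic γ (by ring)
  have hδint : IsIntegral ℤ δ := hquartic δ (by ring)
  have hFint : IsIntegral ℤ F := by
    have hmem : F ∈ integralClosure ℤ ℂ := by
      rw [hFsum]
      refine Subalgebra.sum_mem _ fun k _ => ?_
      refine Subalgebra.mul_mem _ ?_ (Subalgebra.mul_mem _ (Subalgebra.pow_mem _ hγint k)
        (Subalgebra.pow_mem _ hδint _))
      have := Subalgebra.algebraMap_mem (integralClosure ℤ ℂ) (c k)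
      exact_mod_cast this
    exact hmem
  -- conclude: F is a rational algebraic integer, hence an integer
  set r : ℚ := (w : ℚ) / 2 with hr
  have hrF : algebraMap ℚ ℂ r = F := by
    rw [eq_ratCast, hr]
    push_cast
    field_simp
    first
      | linear_combination hw
      | linear_combination -hw
  have hrint : IsIntegral ℤ r :=
    (isIntegral_algebraMap_iff (algebraMap ℚ ℂ).injective).mp (by rwa [hrF])
  obtain ⟨y, hy⟩ := IsIntegrallyClosed.isIntegral_iff.mp hrint
  refine ⟨y, ?_⟩
  rw [← hrF, ← hy]
  simp
end

section
/- Let f(X) = X² − tX − 1 ∈ ℤ[X] with t ≠ 0, and let m be a positive integer with 4 ∤ m. Set n = m/gcd(m,2). Then Res(f(X), Φ_m(X)) · Res(f(−X), Φ_m(X)) = ± Φ_n(γ, δ)², where γ = α, δ = −β for the roots α, β of f, and Φ_n(γ, δ) denotes the homogenized cyclotomic polynomial evaluated at (γ, δ). -/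
open Polynomial

open Finset

lemma sq_injOn (m : ℕ) (hm : 0 < m) (h4 : ¬ (4 ∣ m)) :
    Set.InjOn (fun z : ℂ => z ^ 2) (primitiveRoots m ℂ) := by
  intro a ha b hb hab
  rw [Finset.mem_coe, mem_primitiveRoots hm] at ha hb
  have h0 : (a - b) * (a + b) = 0 := by linear_combination hab
  rcases mul_eq_zero.1 h0 with h | h
  · exact sub_eq_zero.1 h
  · exfalso
    have hab' : a = -b := eq_neg_of_add_eq_zero_left h
    have hmeven : Even m := by
      by_contra hodd
      have hom : Odd m := Nat.odd_iff.2 (Nat.not_even_iff.1 hodd)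
      have h1 : ((-1 : ℂ)) ^ m = 1 := by
        have ham := ha.pow_eq_one
        rw [hab', neg_pow, hb.pow_eq_one, mul_one] at ham
        exact ham
      rw [hom.neg_one_pow] at h1
      norm_num at h1
    obtain ⟨k, hk⟩ := hmeven
    have hk' : m = 2 * k := by omega
    have hkodd : Odd k := by
      rcases Nat.even_or_odd k with he | ho
      · exact absurd (by obtain ⟨j, hj⟩ := he; exact ⟨j, by omega⟩) h4
      · exact ho
    have hk0 : 0 < k := by omega
    have hkm : k < m := by omega
    have hbk : b ^ k = -1 := by
      have hsq : (b ^ k) * (b ^ k) = 1 := by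
        rw [← pow_add]; rw [show k + k = m by omega]; exact hb.pow_eq_one
      have h0' : (b ^ k - 1) * (b ^ k + 1) = 0 := by linear_combination hsq
      rcases mul_eq_zero.1 h0' with h' | h'
      · exact absurd (sub_eq_zero.1 h') (hb.pow_ne_one_of_pos_of_lt hk0.ne' hkm)
      · exact eq_neg_of_add_eq_zero_left h'
    have hak : a ^ k = 1 := by
      rw [hab', hkodd.neg_pow, hbk]; simp
    exact ha.pow_ne_one_of_pos_of_lt hk0.ne' hkm hak

lemma cyclo_eval_neg_mul (m n : ℕ) (hm : 0 < m) (h4 : ¬ (4 ∣ m))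
    (hn : n = m / Nat.gcd m 2) (x : ℂ) :
    (cyclotomic m ℂ).eval x * (cyclotomic m ℂ).eval (-x) =
      (-1 : ℂ) ^ m.totient * (cyclotomic n ℂ).eval (x ^ 2) := by
  -- set up n and case facts
  have hmap : ∀ ζ ∈ primitiveRoots m ℂ, (ζ ^ 2) ∈ primitiveRoots n ℂ := by
    intro ζ hζ
    have hζ' := (mem_primitiveRoots hm).1 hζ
    rcases Nat.even_or_odd m with he | ho
    · obtain ⟨k, hk⟩ := he
      have hk' : m = 2 * k := by omega
      have hg : Nat.gcd m 2 = 2 := by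
        rw [hk']; simp [Nat.gcd_comm]
      have hnk : n = k := by rw [hn, hg, hk']; omega
      have hk0 : 0 < k := by omega
      rw [mem_primitiveRoots (by omega : 0 < n), hnk]
      exact hζ'.pow hm hk'
    · have hg : Nat.gcd m 2 = 1 := Nat.Coprime.gcd_eq_one (Nat.coprime_two_right.2 ho)
      have hnm : n = m := by rw [hn, hg]; omega
      rw [mem_primitiveRoots (by omega : 0 < n), hnm]
      exact hζ'.pow_of_coprime 2 (Nat.coprime_two_left.2 ho)
  have hn0 : 0 < n := by
    have hd : Nat.gcd m 2 ∣ m := Nat.gcd_dvd_left m 2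
    have : Nat.gcd m 2 ≤ m := Nat.le_of_dvd hm hd
    have hg0 : 0 < Nat.gcd m 2 := Nat.gcd_pos_of_pos_left 2 hm
    rw [hn]; exact Nat.div_pos this hg0
  have hcard : (primitiveRoots m ℂ).card = (primitiveRoots n ℂ).card := by
    rw [Complex.card_primitiveRoots, Complex.card_primitiveRoots]
    rcases Nat.even_or_odd m with he | ho
    · obtain ⟨k, hk⟩ := he
      have hk' : m = 2 * k := by omega
      have hg : Nat.gcd m 2 = 2 := by rw [hk']; simp [Nat.gcd_comm]
      have hnk : n = k := by rw [hn, hg, hk']; omega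
      have hkodd : Odd k := by
        rcases Nat.even_or_odd k with he' | ho'
        · exact absurd (by obtain ⟨j, hj⟩ := he'; exact ⟨j, by omega⟩) h4
        · exact ho'
      rw [hk', hnk, Nat.totient_mul (Nat.coprime_two_left.2 hkodd), Nat.totient_two,
        one_mul]
    · have hg : Nat.gcd m 2 = 1 := Nat.Coprime.gcd_eq_one (Nat.coprime_two_right.2 ho)
      have hnm : n = m := by rw [hn, hg]; omega
      rw [hnm]
  have hinj := sq_injOn m hm h4
  have hsurj : Set.SurjOn (fun z : ℂ => z ^ 2) (primitiveRoots m ℂ) (primitiveRoots n ℂ) := by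
    have himg : (primitiveRoots m ℂ).image (fun z : ℂ => z ^ 2) = primitiveRoots n ℂ := by
      apply Finset.eq_of_subset_of_card_le
      · intro y hy
        obtain ⟨ζ, hζ, rfl⟩ := Finset.mem_image.1 hy
        exact hmap ζ hζ
      · rw [Finset.card_image_of_injOn hinj, hcard]
    intro y hy
    rw [← himg] at hy
    obtain ⟨ζ, hζ, hζy⟩ := Finset.mem_image.1 (by exact_mod_cast hy)
    exact ⟨ζ, by exact_mod_cast hζ, hζy⟩
  have hprimm := Complex.isPrimitiveRoot_exp m hm.ne'
  have hprimn := Complex.isPrimitiveRoot_exp n hn0.ne'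
  rw [cyclotomic_eq_prod_X_sub_primitiveRoots hprimm,
    cyclotomic_eq_prod_X_sub_primitiveRoots hprimn]
  simp only [eval_prod, eval_sub, eval_X, eval_C]
  rw [← Finset.prod_mul_distrib]
  have hstep : ∀ ζ ∈ primitiveRoots m ℂ, (x - ζ) * (-x - ζ) = (-1) * (x ^ 2 - ζ ^ 2) := by
    intro ζ _; ring
  rw [Finset.prod_congr rfl hstep, Finset.prod_mul_distrib, Finset.prod_const,
    Complex.card_primitiveRoots]
  congr 1
  exact Finset.prod_nbij (fun z : ℂ => z ^ 2) hmap hinj hsurj (fun a _ => rfl)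

lemma cyclo_eval_inv (n : ℕ) (hn : 0 < n) (y : ℂ) (hy : y ≠ 0) :
    (cyclotomic n ℂ).eval y⁻¹ * y ^ n.totient =
      (cyclotomic n ℂ).eval 0 * (cyclotomic n ℂ).eval y := by
  have hprim := Complex.isPrimitiveRoot_exp n hn.ne'
  rw [cyclotomic_eq_prod_X_sub_primitiveRoots hprim]
  simp only [eval_prod, eval_sub, eval_X, eval_C]
  rw [← Complex.card_primitiveRoots n, ← Finset.prod_const, ← Finset.prod_mul_distrib]
  have hstep : ∀ ζ ∈ primitiveRoots n ℂ, (y⁻¹ - ζ) * y = (0 - ζ) * (y - ζ⁻¹) := by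
    intro ζ hζ
    have hζ' := (mem_primitiveRoots hn).1 hζ
    have hζ0 : ζ ≠ 0 := hζ'.ne_zero hn.ne'
    field_simp
    ring
  rw [Finset.prod_congr rfl hstep, Finset.prod_mul_distrib]
  congr 1
  refine Finset.prod_nbij (i := fun z : ℂ => z⁻¹) (g := fun η : ℂ => y - η) ?_ ?_ ?_ (fun a _ => rfl)
  · intro ζ hζ
    rw [mem_primitiveRoots hn] at hζ ⊢
    exact hζ.inv
  · exact fun a _ b _ h => inv_injective h
  · intro η hη
    refine ⟨η⁻¹, ?_, inv_inv η⟩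
    rw [Finset.mem_coe, mem_primitiveRoots hn] at hη ⊢
    exact hη.inv

/-- Let `f(X) = X² − tX − 1` with `t ≠ 0`, `m` positive with `4 ∤ m`, and
`n = m / gcd(m, 2)`. Let `α, β` be the complex roots of `f` and put `γ = α`, `δ = −β`.
Then `Res(f(X), Φ_m) · Res(f(−X), Φ_m) = ± Φ_n(γ, δ)²`, where for the monic polynomials
`f(X)` and `f(−X)` the resultants are `Φ_m(α)Φ_m(β)` and `Φ_m(−α)Φ_m(−β)` respectively,
and `Φ_n(γ, δ) = Φ_n(γ/δ) · δ^{φ(n)}` is the homogenized cyclotomic polynomial. -/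
theorem stmt15 (t : ℤ) (ht : t ≠ 0) (m : ℕ) (hm : 0 < m) (h4 : ¬ (4 ∣ m))
    (n : ℕ) (hn : n = m / Nat.gcd m 2)
    (α β γ δ : ℂ) (hγ : γ = α) (hδ : δ = -β)
    (hroots : ((X : Polynomial ℤ) ^ 2 - C t * X - 1).map (Int.castRingHom ℂ) =
      (X - C α) * (X - C β)) :
    ∃ ε : ℤ, (ε = 1 ∨ ε = -1) ∧
      ((Polynomial.cyclotomic m ℂ).eval α * (Polynomial.cyclotomic m ℂ).eval β) *
        ((Polynomial.cyclotomic m ℂ).eval (-α) * (Polynomial.cyclotomic m ℂ).eval (-β)) =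
      (ε : ℂ) * ((Polynomial.cyclotomic n ℂ).eval (γ / δ) * δ ^ Nat.totient n) ^ 2 := by
  have hαβ : α * β = -1 := by
    have h := congrArg (Polynomial.eval (0 : ℂ)) hroots
    simp at h
    linear_combination -h
  have hα0 : α ≠ 0 := by
    intro h; rw [h, zero_mul] at hαβ; norm_num at hαβ
  have hβ : β = -α⁻¹ := by
    field_simp
    linear_combination hαβ
  have hδ' : δ = α⁻¹ := by rw [hδ, hβ, neg_neg]
  have hγδ : γ / δ = α ^ 2 := by
    rw [hγ, hδ']
    field_simp
  have hn0 : 0 < n := by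
    have hd : Nat.gcd m 2 ∣ m := Nat.gcd_dvd_left m 2
    have hle : Nat.gcd m 2 ≤ m := Nat.le_of_dvd hm hd
    have hg0 : 0 < Nat.gcd m 2 := Nat.gcd_pos_of_pos_left 2 hm
    rw [hn]; exact Nat.div_pos hle hg0
  have key1a := cyclo_eval_neg_mul m n hm h4 hn α
  have key1b := cyclo_eval_neg_mul m n hm h4 hn β
  have hβ2 : β ^ 2 = (α ^ 2)⁻¹ := by rw [hβ, neg_sq, inv_pow]
  have key2 := cyclo_eval_inv n hn0 (α ^ 2) (pow_ne_zero 2 hα0)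
  refine ⟨if n = 1 then -1 else 1, ?_, ?_⟩
  · split
    · right; rfl
    · left; rfl
  have hε : (((if n = 1 then (-1 : ℤ) else 1) : ℤ) : ℂ) = (cyclotomic n ℂ).eval 0 := by
    split
    · rename_i h1; rw [h1]; simp [cyclotomic_one]
    · rename_i h1
      have h1n : 1 < n := lt_of_le_of_ne hn0 (Ne.symm h1)
      rw [← coeff_zero_eq_eval_zero, cyclotomic_coeff_zero ℂ h1n]; simp
  rw [hε, hγδ, hδ']
  have hLHS : ((cyclotomic m ℂ).eval α * (cyclotomic m ℂ).eval β) *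
      ((cyclotomic m ℂ).eval (-α) * (cyclotomic m ℂ).eval (-β)) =
      (cyclotomic n ℂ).eval (α ^ 2) * (cyclotomic n ℂ).eval ((α ^ 2)⁻¹) := by
    calc ((cyclotomic m ℂ).eval α * (cyclotomic m ℂ).eval β) *
        ((cyclotomic m ℂ).eval (-α) * (cyclotomic m ℂ).eval (-β))
        = ((cyclotomic m ℂ).eval α * (cyclotomic m ℂ).eval (-α)) *
          ((cyclotomic m ℂ).eval β * (cyclotomic m ℂ).eval (-β)) := by ring
      _ = ((-1 : ℂ) ^ m.totient * (cyclotomic n ℂ).eval (α ^ 2)) *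
          ((-1 : ℂ) ^ m.totient * (cyclotomic n ℂ).eval (β ^ 2)) := by rw [key1a, key1b]
      _ = (cyclotomic n ℂ).eval (α ^ 2) * (cyclotomic n ℂ).eval (β ^ 2) := by
          rw [mul_mul_mul_comm, ← mul_pow]; norm_num
      _ = (cyclotomic n ℂ).eval (α ^ 2) * (cyclotomic n ℂ).eval ((α ^ 2)⁻¹) := by rw [hβ2]
  rw [hLHS]
  apply mul_right_cancel₀ (pow_ne_zero n.totient (pow_ne_zero 2 hα0))
  rw [mul_assoc, key2]
  field_simp
  have hA : α ^ (n.totient * 2) * α⁻¹ ^ (n.totient * 2) = 1 := by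
    rw [← mul_pow, mul_inv_cancel₀ hα0, one_pow]
  linear_combination (-(eval (α ^ 2) (cyclotomic n ℂ)) ^ 2 * eval 0 (cyclotomic n ℂ)) * hA
end

section
/- Let f ∈ ℤ[X] be a monic quadratic polynomial with roots α, β such that αβ = 1 and α/β is not a root of unity. Let m be a positive integer. Then Res(f, Φ_m) = ± Φ_m(γ, δ)², where γ = α^{1/2}, δ = α^{−1/2}, and Φ_m(X, Y) = Φ_m(X/Y)Y^{φ(m)} is the homogenized m-th cyclotomic polynomial. -/
open Polynomial

lemma aux_inv_eval (m : ℕ) (hm : 0 < m) (z : ℂ) (hz : z ≠ 0) :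
    z ^ m.totient * (Polynomial.cyclotomic m ℂ).eval z⁻¹ =
      (Polynomial.cyclotomic m ℂ).eval 0 * (Polynomial.cyclotomic m ℂ).eval z := by
  obtain ⟨ζ, hζ⟩ : ∃ ζ : ℂ, IsPrimitiveRoot ζ m :=
    ⟨_, Complex.isPrimitiveRoot_exp m hm.ne'⟩
  have hprod := cyclotomic_eq_prod_X_sub_primitiveRoots hζ
  have hcard := hζ.card_primitiveRoots
  have hne : ∀ μ ∈ primitiveRoots m ℂ, μ ≠ 0 := by
    intro μ hμ
    exact ((mem_primitiveRoots hm).1 hμ).ne_zero hm.ne'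
  have hev : ∀ w : ℂ, (Polynomial.cyclotomic m ℂ).eval w =
      ∏ μ ∈ primitiveRoots m ℂ, (w - μ) := by
    intro w; rw [hprod]; simp [eval_prod]
  have hinv : (∏ μ ∈ primitiveRoots m ℂ, (z - μ)) =
      ∏ μ ∈ primitiveRoots m ℂ, (z - μ⁻¹) := by
    apply Finset.prod_nbij' (fun μ => μ⁻¹) (fun μ => μ⁻¹)
    · intro μ hμ
      exact (mem_primitiveRoots hm).2 ((mem_primitiveRoots hm).1 hμ).inv
    · intro μ hμ
      exact (mem_primitiveRoots hm).2 ((mem_primitiveRoots hm).1 hμ).inv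
    · intro μ hμ; simp
    · intro μ hμ; simp
    · intro μ hμ; rw [inv_inv]
  rw [hev, hev, hev, hinv, ← hcard, ← Finset.prod_const, ← Finset.prod_mul_distrib,
    ← Finset.prod_mul_distrib]
  apply Finset.prod_congr rfl
  intro μ hμ
  have h1 : μ ≠ 0 := hne μ hμ
  field_simp
  ring

lemma aux_eval_zero (m : ℕ) (hm : 0 < m) :
    (Polynomial.cyclotomic m ℂ).eval 0 = ((if m = 1 then (-1 : ℤ) else 1) : ℂ) := by
  rcases eq_or_lt_of_le (Nat.one_le_iff_ne_zero.2 hm.ne') with h | h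
  · simp [← h, cyclotomic_one]
  · rw [if_neg (by omega), ← coeff_zero_eq_eval_zero, cyclotomic_coeff_zero ℂ h]

/-- Let `f ∈ ℤ[X]` be monic quadratic with complex roots `α, β` such that
`αβ = 1` and `α/β` is not a root of unity. Put `γ = α^{1/2}` (any square root of `α`) and
`δ = α^{−1/2} = γ⁻¹`. Then `Res(f, Φ_m) = ± Φ_m(γ, δ)²`, where for the monic `f` the
resultant is `Φ_m(α)Φ_m(β)`, and `Φ_m(γ, δ) = Φ_m(γ/δ) · δ^{φ(m)}`. -/
theorem stmt16 (f : Polynomial ℤ) (hf : f.Monic) (hdeg : f.natDegree = 2)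
    (α β : ℂ) (hroots : f.map (Int.castRingHom ℂ) = (X - C α) * (X - C β))
    (hαβ : α * β = 1) (hru : ∀ k : ℕ, 0 < k → (α / β) ^ k ≠ 1)
    (m : ℕ) (hm : 0 < m)
    (γ δ : ℂ) (hγ : γ ^ 2 = α) (hδ : δ = γ⁻¹) :
    ∃ ε : ℤ, (ε = 1 ∨ ε = -1) ∧
      (Polynomial.cyclotomic m ℂ).eval α * (Polynomial.cyclotomic m ℂ).eval β =
        (ε : ℂ) * ((Polynomial.cyclotomic m ℂ).eval (γ / δ) * δ ^ Nat.totient m) ^ 2 := by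
  have hα0 : α ≠ 0 := by
    intro h; rw [h, zero_mul] at hαβ; exact one_ne_zero hαβ.symm
  have hγ0 : γ ≠ 0 := by
    intro h; apply hα0; rw [← hγ, h]; ring
  have hβ : β = α⁻¹ := by
    field_simp
    linear_combination hαβ
  refine ⟨if m = 1 then -1 else 1, by split <;> simp, ?_⟩
  set E : ℂ := ((if m = 1 then (-1 : ℤ) else 1) : ℂ) with hE
  have hγδ : γ / δ = α := by
    rw [hδ, div_eq_mul_inv, inv_inv, ← sq]; exact hγ
  have key := aux_inv_eval m hm α hα0
  rw [aux_eval_zero m hm, ← hE] at key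
  have hδφ : (δ ^ m.totient) ^ 2 = (α ^ m.totient)⁻¹ := by
    rw [hδ, ← hγ, ← pow_mul, ← pow_mul, ← inv_pow]
    ring_nf
  have hαφ : α ^ m.totient ≠ 0 := pow_ne_zero _ hα0
  have hthis : (Polynomial.cyclotomic m ℂ).eval α⁻¹ =
      E * (Polynomial.cyclotomic m ℂ).eval α / α ^ m.totient := by
    rw [eq_div_iff hαφ]
    linear_combination key
  rw [hβ, hγδ, hthis, mul_pow, hδφ]
  field_simp
  split_ifs with h <;> simp [hE, h] <;> ring
end

section
/- Let g ∈ ℤ[X] be a nonconstant monic polynomial with an integer root a with |a| ≥ 2, and let m be a positive integer such that (a, m) is not of the form (±2^v − 1, 2) with v ≥ 1, nor (−2, 3), nor (2, 6), and m ≥ 2. Then there exists a prime p and an integer linear recurrence with characteristic polynomial g taking exactly m distinct residues modulo p. -/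
open Polynomial


section AuxStmt17
open Finset





lemma eval_cyclo_complex (t : ℕ) (y : ℤ) :
    (((cyclotomic t ℤ).eval y : ℤ) : ℂ) = (cyclotomic t ℂ).eval (y : ℂ) := by
  rw [← map_cyclotomic_int t ℂ]
  rw [show ((y : ℂ)) = ((y : ℤ) : ℂ) by simp, eval_intCast_map]
  simp

lemma abs_sub_root_lt {y : ℤ} (hy : 2 ≤ |y|) {t : ℕ} (ht : 3 ≤ t) {μ : ℂ}
    (hμ : IsPrimitiveRoot μ t) : ((|y| : ℝ) - 1) < Norm.norm ((y : ℂ) - μ) := by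
  have ht0 : t ≠ 0 := by omega
  have hnorm : Norm.norm μ = 1 := Complex.norm_eq_one_of_pow_eq_one hμ.pow_eq_one ht0
  have hnsq : Complex.normSq μ = 1 := by
    have := Complex.sq_norm μ
    rw [hnorm] at this; simpa using this.symm
  have hre : |μ.re| < 1 := by
    have hresq : μ.re ^ 2 + μ.im ^ 2 = 1 := by
      have := hnsq; rw [Complex.normSq_apply] at this; nlinarith
    have him : μ.im ≠ 0 := by
      intro h0
      rw [h0] at hresq
      have : μ.re * μ.re = 1 := by nlinarith
      rcases mul_self_eq_one_iff.mp this with h1 | h1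
      · have hμ1 : μ = 1 := by apply Complex.ext <;> simp [h0, h1]
        rw [hμ1] at hμ
        have := hμ.unique IsPrimitiveRoot.one
        omega
      · have hμ1 : μ = -1 := by apply Complex.ext <;> simp [h0, h1]
        rw [hμ1] at hμ
        have h2 : ((-1 : ℂ)) ^ 2 = 1 := by norm_num
        have := Nat.le_of_dvd (by norm_num) (hμ.dvd_of_pow_eq_one 2 h2)
        omega
    have : μ.re ^ 2 < 1 := by nlinarith [sq_nonneg μ.im, sq_pos_of_ne_zero him]
    nlinarith [sq_abs μ.re, abs_nonneg μ.re]
  -- now square comparison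
  have hyR : (2 : ℝ) ≤ |(y : ℝ)| := by
    rw [← Int.cast_abs]; exact_mod_cast hy
  have habs : (|y| : ℝ) = |(y : ℝ)| := by rw [← Int.cast_abs]
  rw [habs]
  have hker : ((|(y:ℝ)|) - 1) ^ 2 < Norm.norm ((y : ℂ) - μ) ^ 2 := by
    rw [Complex.sq_norm, Complex.normSq_apply]
    simp only [Complex.sub_re, Complex.sub_im, Complex.intCast_re, Complex.intCast_im]
    have h1 : (y:ℝ) * μ.re ≤ |(y:ℝ)| * |μ.re| := by
      calc (y:ℝ) * μ.re ≤ |(y:ℝ) * μ.re| := le_abs_self _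
        _ = |(y:ℝ)| * |μ.re| := abs_mul _ _
    have h2 : |(y:ℝ)| * |μ.re| < |(y:ℝ)| := by nlinarith
    have hresq : μ.re ^ 2 + μ.im ^ 2 = 1 := by
      have := hnsq; rw [Complex.normSq_apply] at this; nlinarith
    nlinarith [sq_abs (y:ℝ)]
  have h0 : (0:ℝ) ≤ Norm.norm ((y : ℂ) - μ) := norm_nonneg _
  nlinarith [abs_nonneg (y:ℝ)]

lemma cyclo_abs_lower {t : ℕ} (ht : 3 ≤ t) {y : ℤ} (hy : 2 ≤ |y|) :
    ((|y| : ℝ) - 1) ^ t.totient < |(((cyclotomic t ℤ).eval y : ℤ) : ℝ)| := by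
  have ht0 : t ≠ 0 := by omega
  have hζ := Complex.isPrimitiveRoot_exp t ht0
  have hprod := cyclotomic_eq_prod_X_sub_primitiveRoots hζ
  have habs : |(((cyclotomic t ℤ).eval y : ℤ) : ℝ)| =
      Norm.norm (((cyclotomic t ℤ).eval y : ℤ) : ℂ) := by
    rw [Complex.norm_intCast]
  rw [habs, eval_cyclo_complex, hprod, eval_prod]
  simp only [eval_sub, eval_X, eval_C]
  rw [norm_prod]
  have hcard : (primitiveRoots t ℂ).card = t.totient := Complex.card_primitiveRoots t
  have hne : (primitiveRoots t ℂ).Nonempty := by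
    rw [← Finset.card_pos, hcard]
    exact Nat.totient_pos.mpr (by omega)
  calc ((|y| : ℝ) - 1) ^ t.totient
      = ∏ _μ ∈ primitiveRoots t ℂ, ((|y| : ℝ) - 1) := by
        rw [Finset.prod_const, hcard]
    _ < ∏ μ ∈ primitiveRoots t ℂ, Norm.norm ((y : ℂ) - μ) := by
        apply Finset.prod_lt_prod_of_nonempty _ _ hne
        · intro i _hi
          have : (2:ℝ) ≤ (|y| : ℝ) := by exact_mod_cast hy
          linarith
        · intro i hi
          exact abs_sub_root_lt hy ht (isPrimitiveRoot_of_mem_primitiveRoots hi)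

lemma cyclo_abs_upper {t : ℕ} (ht : 3 ≤ t) {y : ℤ} :
    |(((cyclotomic t ℤ).eval y : ℤ) : ℝ)| ≤ ((|y| : ℝ) + 1) ^ t.totient := by
  have ht0 : t ≠ 0 := by omega
  have hζ := Complex.isPrimitiveRoot_exp t ht0
  have hprod := cyclotomic_eq_prod_X_sub_primitiveRoots hζ
  have habs : |(((cyclotomic t ℤ).eval y : ℤ) : ℝ)| =
      Norm.norm (((cyclotomic t ℤ).eval y : ℤ) : ℂ) := by
    rw [Complex.norm_intCast]
  rw [habs, eval_cyclo_complex, hprod, eval_prod]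
  simp only [eval_sub, eval_X, eval_C]
  rw [norm_prod]
  have hcard : (primitiveRoots t ℂ).card = t.totient := Complex.card_primitiveRoots t
  calc ∏ μ ∈ primitiveRoots t ℂ, Norm.norm ((y : ℂ) - μ)
      ≤ ∏ _μ ∈ primitiveRoots t ℂ, ((|y| : ℝ) + 1) := by
        apply Finset.prod_le_prod
        · intro i _; exact norm_nonneg _
        · intro i hi
          have h1 : Norm.norm ((y:ℂ) - i) ≤ Norm.norm (y:ℂ) + Norm.norm i := by
            exact (norm_sub_le _ _)
          have h2 : Norm.norm (y:ℂ) = (|y| : ℝ) := by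
            rw [Complex.norm_intCast, ← Int.cast_abs]
          have h3 : Norm.norm i = 1 := Complex.norm_eq_one_of_pow_eq_one
            (isPrimitiveRoot_of_mem_primitiveRoots hi).pow_eq_one ht0
          rw [h2, h3] at h1; exact h1
    _ = ((|y| : ℝ) + 1) ^ t.totient := by rw [Finset.prod_const, hcard]



-- Φ_{p^k t} = expand_{p^{k-1}} Φ_{p t}
lemma cyclo_pow_expand (p t : ℕ) (hp : p.Prime) (ht : 0 < t) :
    ∀ k : ℕ, 1 ≤ k →
      cyclotomic (p ^ k * t) ℤ = expand ℤ (p ^ (k - 1)) (cyclotomic (p * t) ℤ) := by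
  intro k
  induction k with
  | zero => omega
  | succ n ih =>
    intro _
    rcases Nat.eq_or_lt_of_le (Nat.one_le_iff_ne_zero.mpr (Nat.succ_ne_zero n)) with h1 | h1
    · obtain rfl : n = 0 := by omega
      simp [expand_one]
    · have hn : 1 ≤ n := by omega
      have hdvd : p ∣ p ^ n * t := Dvd.dvd.mul_right (dvd_pow_self p (by omega)) t
      have := cyclotomic_expand_eq_cyclotomic hp hdvd ℤ
      have heq : p ^ (n+1) * t = (p ^ n * t) * p := by ring
      rw [heq, ← this, ih hn, expand_expand]
      congr 1
      have : n + 1 - 1 = (n - 1) + 1 := by omega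
      rw [this, pow_succ, mul_comm]

-- ★ : Φ_m(a) * Φ_t(a^{p^{k-1}}) = Φ_t(a^{p^k})
lemma star_identity (p t k : ℕ) (hp : p.Prime) (ht : 0 < t) (hpt : ¬ p ∣ t) (hk : 1 ≤ k)
    (a : ℤ) :
    (cyclotomic (p ^ k * t) ℤ).eval a * (cyclotomic t ℤ).eval (a ^ (p ^ (k-1)))
      = (cyclotomic t ℤ).eval (a ^ (p ^ k)) := by
  have h1 := cyclo_pow_expand p t hp ht k hk
  have h2 : expand ℤ p (cyclotomic t ℤ) = cyclotomic (t * p) ℤ * cyclotomic t ℤ :=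
    cyclotomic_expand_eq_cyclotomic_mul hp hpt ℤ
  have h3 : (cyclotomic (p ^ k * t) ℤ).eval a = (cyclotomic (p * t) ℤ).eval (a ^ (p ^ (k-1))) := by
    rw [h1, expand_eval]
  rw [h3]
  set y := a ^ (p ^ (k-1)) with hy
  have h4 : (cyclotomic (p * t) ℤ).eval y * (cyclotomic t ℤ).eval y
      = (cyclotomic t ℤ).eval (y ^ p) := by
    rw [← expand_eval p (cyclotomic t ℤ) y, h2, eval_mul, mul_comm t p]
  rw [h4, hy, ← pow_mul]
  congr 2
  rw [← pow_succ]
  congr 1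
  omega

-- step B modular arithmetic (odd p)
lemma sum_pow_not_dvd_sq {p : ℕ} (hp : p.Prime) (hodd : p ≠ 2) {b : ℤ}
    (hb : (p : ℤ) ∣ b - 1) : ¬ ((p : ℤ)^2 ∣ ∑ i ∈ Finset.range p, b ^ i) := by
  have hmod : ∀ i : ℕ, (p:ℤ) ∣ (∑ j ∈ Finset.range i, b ^ j) - i := by
    intro i
    induction i with
    | zero => simp
    | succ n ih =>
      rw [Finset.sum_range_succ]
      have h1 : (p:ℤ) ∣ b ^ n - 1 := by
        have : b ^ n - 1 = (b - 1) * ∑ j ∈ Finset.range n, b ^ j := by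
          rw [mul_comm, geom_sum_mul]
        rw [this]; exact Dvd.dvd.mul_right hb _
      have : (∑ j ∈ Finset.range n, b ^ j + b ^ n) - ((n:ℤ) + 1)
          = ((∑ j ∈ Finset.range n, b ^ j) - n) + (b ^ n - 1) := by ring
      push_cast
      rw [this]
      exact dvd_add ih h1
  -- ∑ - p = (b-1) * T with p ∣ T
  have hT : (p:ℤ)^2 ∣ (∑ i ∈ Finset.range p, b ^ i) - p := by
    have hsum : (∑ i ∈ Finset.range p, b ^ i) - p
        = (b - 1) * ∑ i ∈ Finset.range p, (∑ j ∈ Finset.range i, b ^ j) := by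
      rw [Finset.mul_sum]
      have : ∀ i ∈ Finset.range p, (b - 1) * (∑ j ∈ Finset.range i, b ^ j) = b ^ i - 1 := by
        intro i _
        rw [mul_comm, geom_sum_mul]
      rw [Finset.sum_congr rfl this, Finset.sum_sub_distrib]
      simp
    rw [hsum, sq]
    apply mul_dvd_mul hb
    -- p ∣ ∑ S_i  since S_i ≡ i and ∑ i = p(p-1)/2 divisible by p (p odd)
    have h1 : (p:ℤ) ∣ (∑ i ∈ Finset.range p, (∑ j ∈ Finset.range i, b ^ j))
        - ∑ i ∈ Finset.range p, (i : ℤ) := by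
      rw [← Finset.sum_sub_distrib]
      exact Finset.dvd_sum (fun i _ => hmod i)
    have h2 : (p:ℤ) ∣ ∑ i ∈ Finset.range p, (i : ℤ) := by
      have hgauss : (∑ i ∈ Finset.range p, (i:ℕ)) * 2 = p * (p - 1) := by
        rw [Finset.sum_range_id_mul_two]
      have hd : p ∣ (∑ i ∈ Finset.range p, (i:ℕ)) * 2 := hgauss ▸ Dvd.intro _ rfl
      have hcop : Nat.Coprime p 2 := (Nat.coprime_primes hp Nat.prime_two).mpr hodd
      have : p ∣ (∑ i ∈ Finset.range p, (i:ℕ)) := (Nat.Coprime.dvd_of_dvd_mul_right hcop) hd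
      have := Int.natCast_dvd_natCast.mpr this
      simpa using this
    have := dvd_add h1 h2
    simpa using this
  intro hdvd
  have : (p:ℤ)^2 ∣ (p:ℤ) := by
    have := dvd_sub hdvd hT
    simpa using this
  have hple := Int.le_of_dvd (by exact_mod_cast hp.pos) this
  have : (p:ℤ) ≥ 2 := by exact_mod_cast hp.two_le
  nlinarith



lemma stepA {p m : ℕ} (hp : p.Prime) (hm : 0 < m) (hpm : p ∣ m) {a : ℤ}
    (hdvd : (p:ℤ) ∣ (cyclotomic m ℤ).eval a) :
    IsPrimitiveRoot ((a : ZMod p)) (m / p ^ m.factorization p) := by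
  haveI : Fact p.Prime := ⟨hp⟩
  set k := m.factorization p with hk
  set t := m / p ^ k with htdef
  have hmt : p ^ k * t = m := Nat.ordProj_mul_ordCompl_eq_self m p
  have hpt : ¬ p ∣ t := Nat.not_dvd_ordCompl hp hm.ne'
  have ht0 : 0 < t := Nat.ordCompl_pos p hm.ne'
  haveI : NeZero ((t : ZMod p)) := ⟨by
    rw [Ne, ZMod.natCast_eq_zero_iff]
    exact hpt⟩
  have hroot : (((cyclotomic m ℤ).eval a : ℤ) : ZMod p) = 0 :=
    (ZMod.intCast_zmod_eq_zero_iff_dvd ((cyclotomic m ℤ).eval a) p).mpr hdvd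
  have hroot2 : (cyclotomic m (ZMod p)).IsRoot ((a : ZMod p)) := by
    have h1 := eval_intCast_map (Int.castRingHom (ZMod p)) (cyclotomic m ℤ) a
    rw [map_cyclotomic_int] at h1
    rw [IsRoot.def]
    rw [show ((a : ZMod p)) = ((a : ℤ) : ZMod p) by simp] at h1 ⊢
    rw [h1]
    exact hroot
  rw [← hmt] at hroot2
  exact (isRoot_cyclotomic_prime_pow_mul_iff_of_charP).mp hroot2

lemma eval_cyclo_ne_zero {t : ℕ} (ht : 0 < t) {y : ℤ} (hy : 2 ≤ |y|) :
    (cyclotomic t ℤ).eval y ≠ 0 := by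
  intro h0
  have hdvd : (cyclotomic t ℤ).eval y ∣ (X ^ t - 1 : ℤ[X]).eval y :=
    eval_dvd (cyclotomic.dvd_X_pow_sub_one t ℤ)
  rw [h0] at hdvd
  have : (X ^ t - 1 : ℤ[X]).eval y = 0 := zero_dvd_iff.mp hdvd
  simp only [eval_sub, eval_pow, eval_X, eval_one, sub_eq_zero] at this
  have h1 : |y| ^ t = 1 := by rw [← abs_pow, this]; simp
  have h2 : |y| ^ t ≥ 2 ^ t := pow_le_pow_left₀ (by norm_num) hy t
  have h3 : (2:ℤ) ^ t ≥ 2 ^ 1 := pow_le_pow_right₀ (by norm_num) ht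
  simp at h3
  omega

lemma odd_sq_sub_one {c : ℤ} (hc : ¬ (2:ℤ) ∣ c) : (8:ℤ) ∣ c^2 - 1 := by
  obtain ⟨d, rfl⟩ : ∃ d, c = 2*d + 1 := ⟨(c-1)/2, by omega⟩
  have h : (2*d+1)^2 - 1 = 4 * (d * (d+1)) := by ring
  rw [h]
  obtain ⟨e, he⟩ := Int.even_mul_succ_self d
  exact ⟨e, by rw [he]; ring⟩



lemma nat_two_pow_aux : ∀ p : ℕ, 5 ≤ p → p + 1 ≤ 2 ^ (p - 2) := by
  intro p hp
  induction p, hp using Nat.le_induction with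
  | base => norm_num
  | succ n hn ih =>
    have h1 : n + 1 - 2 = (n - 2) + 1 := by omega
    rw [h1, pow_succ]
    omega

lemma ineqV1 {b : ℤ} (hb : 4 ≤ b) : 2 * (b + 1) + 1 < b ^ 2 := by nlinarith

lemma ineqV2 {b : ℤ} {p : ℕ} (hp : 3 ≤ p) (hb : (p : ℤ) + 1 ≤ b) :
    (p : ℤ) * (b + 1) + 1 < b ^ p := by
  have hp3 : (3 : ℤ) ≤ (p : ℤ) := by exact_mod_cast hp
  have hb4 : 4 ≤ b := by linarith
  have h3 : b ^ 3 ≤ b ^ p := pow_le_pow_right₀ (by linarith) hp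
  have h1 : (p:ℤ) * (b + 1) ≤ (b - 1) * (b + 1) :=
    mul_le_mul_of_nonneg_right (by linarith) (by linarith)
  have h2 : b ^ 3 = b * b * b := by ring
  nlinarith [h1, h3, h2]

lemma ineqV3 {b : ℤ} {p : ℕ} (hp : 3 ≤ p) (hb : 3 ≤ b) (hpb : (p : ℤ) ≤ b + 1) :
    (p : ℤ) * (b + 1) + 1 < b ^ p := by
  have h3 : b ^ 3 ≤ b ^ p := pow_le_pow_right₀ (by linarith) hp
  have h1 : (p:ℤ) * (b + 1) ≤ (b + 1) * (b + 1) :=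
    mul_le_mul_of_nonneg_right hpb (by linarith)
  have h2 : b ^ 3 = b * b * b := by ring
  have h4 : 3 * b ≤ b * b := by nlinarith
  have h5 : 3 * (b * b) ≤ b * (b * b) := by nlinarith
  nlinarith [h1, h3, h2, h4, h5]

lemma ineqV4 {b : ℤ} {p : ℕ} (hb : 2 ≤ b) (hp : 5 ≤ p) :
    (p : ℤ) * (b + 1) + 1 < b ^ p := by
  have haux : ((p : ℤ)) + 1 ≤ 2 ^ (p - 2) := by exact_mod_cast nat_two_pow_aux p hp
  have h1 : (2 : ℤ) ^ (p - 2) ≤ b ^ (p - 2) := pow_le_pow_left₀ (by norm_num) hb _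
  have h2 : b ^ p = b ^ (p - 2) * b ^ 2 := by
    rw [← pow_add]; congr 1; omega
  have hp0 : (5 : ℤ) ≤ (p : ℤ) := by exact_mod_cast hp
  have h4 : ((p:ℤ) + 1) * b ^ 2 ≤ b ^ (p - 2) * b ^ 2 := by
    apply mul_le_mul_of_nonneg_right (le_trans haux h1) (by positivity)
  have h6 : (p:ℤ) * 2 ≤ (p:ℤ) * b := mul_le_mul_of_nonneg_left hb (by linarith)
  have h7 : (p:ℤ) * (2 * b) ≤ (p:ℤ) * (b * b) := by nlinarith
  have h8 : (2:ℤ) * 2 ≤ b * b := mul_le_mul hb hb (by norm_num) (by linarith)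
  have h9 : b ^ 2 = b * b := by ring
  rw [h2, h9]
  nlinarith [h4, h6, h7, h8]

lemma stepB {p m : ℕ} (hp : p.Prime) (hm : 3 ≤ m) (hpm : p ∣ m) {a : ℤ} (ha : 2 ≤ |a|)
    (hdvd : (p:ℤ) ∣ (cyclotomic m ℤ).eval a) :
    ¬ ((p:ℤ)^2 ∣ (cyclotomic m ℤ).eval a) := by
  haveI : Fact p.Prime := ⟨hp⟩
  have hm0 : 0 < m := by omega
  set D := (cyclotomic m ℤ).eval a with hD
  set k := m.factorization p with hk
  set t := m / p ^ k with htdef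
  have hmt : p ^ k * t = m := Nat.ordProj_mul_ordCompl_eq_self m p
  have hpt : ¬ p ∣ t := Nat.not_dvd_ordCompl hp hm0.ne'
  have ht0 : 0 < t := Nat.ordCompl_pos p hm0.ne'
  have hk1 : 1 ≤ k := hp.factorization_pos_of_dvd hm0.ne' hpm
  have hprim : IsPrimitiveRoot ((a : ZMod p)) t := stepA hp hm0 hpm hdvd
  -- D divides the geometric sum S = ∑_{i<p} b^i with b = a^(m/p)
  set b := a ^ (m / p) with hb
  have hmp1 : 1 ≤ m / p := Nat.one_le_div_iff hp.pos |>.mpr (Nat.le_of_dvd hm0 hpm)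
  have hmplt : m / p < m := Nat.div_lt_self hm0 hp.one_lt
  have hdS : D ∣ ∑ i ∈ Finset.range p, b ^ i := by
    have hd : m / p ∈ m.properDivisors :=
      Nat.mem_properDivisors.mpr ⟨Nat.div_dvd_of_dvd hpm, hmplt⟩
    have h1 : ((X:ℤ[X]) ^ (m/p) - 1) * cyclotomic m ℤ ∣ (X:ℤ[X]) ^ m - 1 :=
      X_pow_sub_one_mul_cyclotomic_dvd_X_pow_sub_one_of_dvd ℤ hd
    have h2 := eval_dvd (x := a) h1
    simp only [eval_mul, eval_sub, eval_pow, eval_X, eval_one] at h2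
    have h3 : a ^ m - 1 = (a ^ (m/p) - 1) * ∑ i ∈ Finset.range p, b ^ i := by
      have h4 : (∑ i ∈ Finset.range p, b ^ i) * (b - 1) = b ^ p - 1 := geom_sum_mul b p
      have h5 : b ^ p = a ^ m := by
        rw [hb, ← pow_mul, Nat.div_mul_cancel hpm]
      rw [← h5, ← h4, hb]; ring
    rw [h3] at h2
    have hc : a ^ (m/p) - 1 ≠ 0 := by
      intro h0
      have : a ^ (m/p) = 1 := by omega
      have h1' : |a| ^ (m/p) = 1 := by rw [← abs_pow, this]; simp
      have h2' : (2:ℤ) ^ (m/p) ≤ |a| ^ (m/p) := pow_le_pow_left₀ (by norm_num) ha _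
      have h3' : (2:ℤ) ^ 1 ≤ (2:ℤ) ^ (m/p) := pow_le_pow_right₀ (by norm_num) hmp1
      simp at h3'
      omega
    exact (mul_dvd_mul_iff_left hc).mp h2
  -- p ∣ b - 1
  have htdvd : t ∣ m / p := by
    have h1 : t * p ∣ m := by
      refine ⟨p ^ (k - 1), ?_⟩
      rw [← hmt]
      have : p ^ k = p * p ^ (k - 1) := by
        conv_lhs => rw [show k = 1 + (k - 1) by omega, pow_add, pow_one]
      rw [this]; ring
    exact (Nat.dvd_div_iff_mul_dvd hpm).mpr (by rwa [mul_comm] at h1)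
  have hb1 : (p:ℤ) ∣ b - 1 := by
    have hx : ((a : ZMod p)) ^ (m / p) = 1 := by
      obtain ⟨c, hc⟩ := htdvd
      rw [hc, pow_mul, hprim.pow_eq_one, one_pow]
    have : ((b - 1 : ℤ) : ZMod p) = 0 := by
      rw [hb]
      push_cast
      rw [hx]; ring
    exact (ZMod.intCast_zmod_eq_zero_iff_dvd _ p).mp this
  rcases eq_or_ne p 2 with hp2 | hp2
  · -- p = 2
    subst hp2
    -- t = 1 and m = 2^k with k ≥ 2, a odd
    have hxne : ((a : ZMod 2)) ≠ 0 := hprim.ne_zero ht0.ne'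
    have haodd : ¬ (2:ℤ) ∣ a := by
      intro h2a
      exact hxne ((ZMod.intCast_zmod_eq_zero_iff_dvd a 2).mpr h2a)
    have ht1 : t = 1 := by
      have := hprim.dvd_of_pow_eq_one 1 (by
        have := ZMod.pow_card_sub_one_eq_one hxne
        simpa using this)
      simpa using Nat.dvd_one.mp this
    have hk2 : 2 ≤ k := by
      by_contra hlt
      have : k = 1 := by omega
      rw [ht1, this] at hmt
      simp at hmt
      omega
    -- m / 2 = 2^(k-1) is even
    have hmeven : 2 ∣ m / 2 := by
      have hm2k : m = 2 ^ k := by rw [← hmt, ht1, mul_one]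
      have h2 : m = 2 * 2 ^ (k - 1) := by
        rw [hm2k, ← pow_succ']
        congr 1; omega
      rw [h2, Nat.mul_div_cancel_left _ (by norm_num)]
      exact dvd_pow_self 2 (by omega)
    obtain ⟨e, he⟩ := hmeven
    have hbsq : b = (a ^ e) ^ 2 := by rw [hb, he, pow_mul']
    have h8 : (8:ℤ) ∣ b - 1 := by
      rw [hbsq]
      exact odd_sq_sub_one (fun hd => haodd (Int.prime_two.dvd_of_dvd_pow hd))
    intro hsq
    have h4S : (4:ℤ) ∣ ∑ i ∈ Finset.range 2, b ^ i := dvd_trans (by norm_num at hsq ⊢; exact hsq) hdS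
    have hSeq : ∑ i ∈ Finset.range 2, b ^ i = 1 + b := by
      rw [Finset.sum_range_succ, Finset.sum_range_one]; ring
    rw [hSeq] at h4S
    obtain ⟨u, hu⟩ := h8
    obtain ⟨v, hv⟩ := h4S
    omega
  · -- p odd
    intro hsq
    exact sum_pow_not_dvd_sq hp hp2 hb1 (dvd_trans hsq hdS)

lemma key_exists (a : ℤ) (ha : 2 ≤ |a|) (m : ℕ) (hm : 3 ≤ m)
    (hex3 : ¬(a = -2 ∧ m = 3)) (hex6 : ¬(a = 2 ∧ m = 6)) :
    ∃ p : ℕ, p.Prime ∧ ¬ p ∣ m ∧ (p:ℤ) ∣ (cyclotomic m ℤ).eval a := by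
  by_contra hcontra
  have hcon : ∀ p : ℕ, p.Prime → (p:ℤ) ∣ (cyclotomic m ℤ).eval a → p ∣ m := by
    intro p hp hd
    by_contra h
    exact hcontra ⟨p, hp, h, hd⟩
  set D := (cyclotomic m ℤ).eval a with hD
  have hm0 : 0 < m := by omega
  have haR : (2:ℝ) ≤ |(a : ℝ)| := by
    rw [← Int.cast_abs]; exact_mod_cast ha
  have hD2 : 2 ≤ |D| := by
    have hlow := cyclo_abs_lower hm ha
    have h1 : (1:ℝ) ≤ (|(a:ℝ)| - 1) ^ m.totient := one_le_pow₀ (by linarith)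
    have h2 : (1:ℝ) < |((D:ℤ) : ℝ)| := lt_of_le_of_lt h1 hlow
    rw [← Int.cast_abs] at h2
    exact_mod_cast h2
  have hDnat : 2 ≤ D.natAbs := by
    rw [Int.abs_eq_natAbs] at hD2; exact_mod_cast hD2
  set p := D.natAbs.minFac with hpdef
  have hp : p.Prime := Nat.minFac_prime (by omega)
  haveI : Fact p.Prime := ⟨hp⟩
  have hpDn : p ∣ D.natAbs := Nat.minFac_dvd _
  have hpD : (p:ℤ) ∣ D := (Int.natCast_dvd_natCast.mpr hpDn).trans (Int.natAbs_dvd.mpr dvd_rfl)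
  have hpm : p ∣ m := hcon p hp hpD
  set k := m.factorization p with hk
  set t := m / p ^ k with htdef
  have hmt : p ^ k * t = m := Nat.ordProj_mul_ordCompl_eq_self m p
  have hpt : ¬ p ∣ t := Nat.not_dvd_ordCompl hp hm0.ne'
  have ht0 : 0 < t := Nat.ordCompl_pos p hm0.ne'
  have hk1 : 1 ≤ k := hp.factorization_pos_of_dvd hm0.ne' hpm
  have hprim : IsPrimitiveRoot ((a : ZMod p)) t := stepA hp hm0 hpm hpD
  have hane : ((a : ZMod p)) ≠ 0 := hprim.ne_zero ht0.ne'
  have htp1 : t ∣ p - 1 := hprim.dvd_of_pow_eq_one (p-1) (ZMod.pow_card_sub_one_eq_one hane)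
  have htp : t < p := by
    have h1 : t ≤ p - 1 := Nat.le_of_dvd (by have := hp.two_le; omega) htp1
    have := hp.two_le; omega
  have hnot2 : ¬ (p:ℤ)^2 ∣ D := stepB hp hm hpm ha hpD
  -- |D| = p
  have hDp : D.natAbs = p := by
    by_contra hne
    have hc0 : D.natAbs / p ≠ 1 := by
      intro h1
      apply hne
      have h2 := Nat.div_mul_cancel hpDn
      rw [h1, one_mul] at h2
      omega
    obtain ⟨q, hqprime, hqDp⟩ : ∃ q, q.Prime ∧ q ∣ D.natAbs / p :=
      ⟨(D.natAbs / p).minFac, Nat.minFac_prime hc0, Nat.minFac_dvd _⟩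
    have hqD : q ∣ D.natAbs := hqDp.trans (Nat.div_dvd_of_dvd hpDn)
    have hqDz : (q:ℤ) ∣ D := (Int.natCast_dvd_natCast.mpr hqD).trans (Int.natAbs_dvd.mpr dvd_rfl)
    have hqm : q ∣ m := hcon q hqprime hqDz
    rcases eq_or_ne q p with hqp | hqp
    · apply hnot2
      have h3 : p ∣ D.natAbs / p := hqp ▸ hqDp
      have h4 : p * p ∣ D.natAbs := (Nat.dvd_div_iff_mul_dvd hpDn).mp h3
      have h5 : ((p * p : ℕ) : ℤ) ∣ D :=
        (Int.natCast_dvd_natCast.mpr h4).trans (Int.natAbs_dvd.mpr dvd_rfl)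
      have h6 : (p:ℤ)^2 = ((p * p : ℕ) : ℤ) := by push_cast; ring
      rw [h6]; exact h5
    · haveI : Fact q.Prime := ⟨hqprime⟩
      set kq := m.factorization q with hkq
      set tq := m / q ^ kq with htqdef
      have hmtq : q ^ kq * tq = m := Nat.ordProj_mul_ordCompl_eq_self m q
      have htq0 : 0 < tq := Nat.ordCompl_pos q hm0.ne'
      have hqprim : IsPrimitiveRoot ((a : ZMod q)) tq := stepA hqprime hm0 hqm hqDz
      have haneq : ((a : ZMod q)) ≠ 0 := hqprim.ne_zero htq0.ne'
      have htq1 : tq ∣ q - 1 := hqprim.dvd_of_pow_eq_one (q-1) (ZMod.pow_card_sub_one_eq_one haneq)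
      have htqq : tq < q := by
        have h1 : tq ≤ q - 1 := Nat.le_of_dvd (by have := hqprime.two_le; omega) htq1
        have := hqprime.two_le; omega
      have hq_t : q ∣ t := by
        have h1 : q ∣ p ^ k * t := by rw [hmt]; exact hqm
        rcases (Nat.Prime.dvd_mul hqprime).mp h1 with h2 | h2
        · exact absurd ((Nat.prime_dvd_prime_iff_eq hqprime hp).mp
            (hqprime.dvd_of_dvd_pow h2)) hqp
        · exact h2
      have hp_tq : p ∣ tq := by
        have h1 : p ∣ q ^ kq * tq := by rw [hmtq]; exact hpm
        rcases (Nat.Prime.dvd_mul hp).mp h1 with h2 | h2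
        · exact absurd ((Nat.prime_dvd_prime_iff_eq hp hqprime).mp
            (hp.dvd_of_dvd_pow h2)) (Ne.symm hqp)
        · exact h2
      have h5 : q ≤ t := Nat.le_of_dvd ht0 hq_t
      have h6 : p ≤ tq := Nat.le_of_dvd htq0 hp_tq
      omega
  have hDabs : |D| = (p:ℤ) := by rw [Int.abs_eq_natAbs, hDp]
  -- the ★ setup
  set y := a ^ (p ^ (k-1)) with hy
  set E := (cyclotomic t ℤ).eval y with hE
  set F := (cyclotomic t ℤ).eval (y ^ p) with hF
  have hstar : D * E = F := by
    have hs := star_identity p t k hp ht0 hpt hk1 a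
    rw [hmt] at hs
    have hyp : y ^ p = a ^ (p ^ k) := by
      have hkk : p ^ (k-1) * p = p ^ k := by
        rw [← pow_succ]
        congr 1
        omega
      rw [hy, ← pow_mul, hkk]
    rw [hD, hE, hF, hy, hyp]
    exact hs
  have hyabs : 2 ≤ |y| := by
    rw [hy, abs_pow]
    calc (2:ℤ) = 2 ^ 1 := by norm_num
      _ ≤ 2 ^ (p ^ (k-1)) := pow_le_pow_right₀ (by norm_num) (Nat.one_le_pow _ _ hp.pos)
      _ ≤ |a| ^ (p ^ (k-1)) := pow_le_pow_left₀ (by norm_num) ha _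
  have hypabs : 2 ≤ |y ^ p| := by
    rw [abs_pow]
    calc (2:ℤ) = 2 ^ 1 := by norm_num
      _ ≤ 2 ^ p := pow_le_pow_right₀ (by norm_num) hp.one_lt.le
      _ ≤ |y| ^ p := pow_le_pow_left₀ (by norm_num) hyabs _
  have hEne : E ≠ 0 := eval_cyclo_ne_zero ht0 hyabs
  have hEpos : 0 < |E| := abs_pos.mpr hEne
  have habseq : (p:ℤ) * |E| = |F| := by rw [← hDabs, ← abs_mul, hstar]
  have hgoal : ¬ ((p:ℤ) * |E| < |F|) := by rw [habseq]; exact lt_irrefl _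
  apply hgoal
  set b := |y| with hb
  -- case t small or large
  rcases lt_or_ge t 3 with ht3 | ht3
  · -- t = 1 or t = 2
    -- derive hV : p * (b+1) + 1 < b^p, plus E,F formulas
    have hEF : |E| ≤ b + 1 ∧ b ^ p - 1 ≤ |F| := by
      interval_cases t
      · -- t = 1
        constructor
        · rw [hE, cyclotomic_one]
          simp only [eval_sub, eval_X, eval_one]
          calc |y - 1| = |y + (-1)| := by ring_nf
            _ ≤ |y| + |(-1 : ℤ)| := abs_add_le _ _
            _ = b + 1 := by simp [hb]
        · rw [hF, cyclotomic_one]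
          simp only [eval_sub, eval_X, eval_one]
          calc b ^ p - 1 = |y ^ p| - |(1:ℤ)| := by rw [abs_pow, hb]; simp
            _ ≤ |y ^ p - 1| := abs_sub_abs_le_abs_sub _ _
      · -- t = 2
        constructor
        · rw [hE, cyclotomic_two]
          simp only [eval_add, eval_X, eval_one]
          calc |y + 1| ≤ |y| + |(1 : ℤ)| := abs_add_le _ _
            _ = b + 1 := by simp [hb]
        · rw [hF, cyclotomic_two]
          simp only [eval_add, eval_X, eval_one]
          calc b ^ p - 1 = |y ^ p| - |(-1:ℤ)| := by rw [abs_pow, hb]; simp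
            _ ≤ |y ^ p - (-1)| := abs_sub_abs_le_abs_sub _ _
            _ = |y ^ p + 1| := by ring_nf
    have hV : (p:ℤ) * (b + 1) + 1 < b ^ p := by
      have hxp1 : t = 1 → ((a : ZMod p)) = 1 := by
        intro ht1
        have := hprim.pow_eq_one
        rwa [ht1, pow_one] at this
      have hxp2 : t = 2 → ((a : ZMod p)) = -1 := by
        intro ht2
        have h1 : ((a : ZMod p)) ^ 2 = 1 := by rw [← ht2]; exact hprim.pow_eq_one
        have h2 : ((a : ZMod p)) ≠ 1 := by
          have := hprim.pow_ne_one_of_pos_of_lt (l := 1) one_ne_zero (by omega)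
          rwa [pow_one] at this
        have h3 : (((a : ZMod p)) - 1) * (((a : ZMod p)) + 1) = 0 := by ring_nf; rw [h1]; ring
        rcases mul_eq_zero.mp h3 with h4 | h4
        · exact absurd (by linear_combination h4) h2
        · linear_combination h4
      -- k ≥ 2 shortcut
      have hbig : 2 ≤ k → 3 ≤ p → (p:ℤ) + 1 ≤ b := by
        intro hk2 hp3
        have h1 : p + 1 ≤ 2 ^ p := Nat.lt_two_pow_self
        have hexp : p ≤ p ^ (k-1) := Nat.le_self_pow (by omega) p
        have h2 : (2:ℤ) ^ p ≤ 2 ^ (p ^ (k-1)) := pow_le_pow_right₀ (by norm_num) hexp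
        have h3 : (2:ℤ) ^ (p ^ (k-1)) ≤ |a| ^ (p ^ (k-1)) := pow_le_pow_left₀ (by norm_num) ha _
        have h4 : ((p:ℤ)) + 1 ≤ 2 ^ p := by exact_mod_cast h1
        rw [hb, hy, abs_pow]
        exact le_trans h4 (le_trans h2 h3)
      interval_cases t
      · -- t = 1 : p ∣ a - 1
        have hx1 := hxp1 rfl
        have hpa : (p:ℤ) ∣ a - 1 := by
          have : ((a - 1 : ℤ) : ZMod p) = 0 := by push_cast; rw [hx1]; ring
          exact (ZMod.intCast_zmod_eq_zero_iff_dvd _ p).mp this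
        rcases eq_or_ne p 2 with hp2 | hp2
        · -- p = 2 : a odd hence |a| ≥ 3, k ≥ 2, b ≥ 9
          have hp2z : ((p:ℤ)) = 2 := by rw [hp2]; norm_num
          have h21 : (2:ℤ) ∣ a - 1 := by rw [← hp2z]; exact hpa
          have haodd : ¬ (2:ℤ) ∣ a := by
            obtain ⟨c, hc⟩ := h21
            rintro ⟨d, hd⟩
            omega
          have ha3 : 3 ≤ |a| := by
            rcases abs_cases a with ⟨h1, _⟩ | ⟨h1, _⟩ <;> omega
          have hk2 : 2 ≤ k := by
            by_contra hlt
            have hkk : k = 1 := by omega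
            rw [hkk, hp2] at hmt
            simp at hmt
            omega
          have hb9 : 4 ≤ b := by
            have h1 : (2:ℕ) ≤ p ^ (k-1) := by
              rw [hp2]
              calc (2:ℕ) = 2^1 := by norm_num
                _ ≤ 2 ^ (k-1) := Nat.pow_le_pow_right (by norm_num) (by omega)
            have h2 : (3:ℤ)^2 ≤ |a| ^ (p ^ (k-1)) := by
              calc (3:ℤ)^2 ≤ (3:ℤ) ^ (p ^ (k-1)) := pow_le_pow_right₀ (by norm_num) h1
                _ ≤ |a| ^ (p ^ (k-1)) := pow_le_pow_left₀ (by norm_num) ha3 _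
            rw [hb, hy, abs_pow]
            omega
          rw [hp2]
          have := ineqV1 hb9
          exact_mod_cast this
        · have hp3 : 3 ≤ p := by have := hp.two_le; omega
          rcases lt_or_ge k 2 with hklt | hk2
          · -- k = 1, m = p
            have hkk : k = 1 := by omega
            have hmp : m = p := by rw [← hmt, hkk]; simp
            rcases le_or_gt 2 a with hage | halt
            · -- a ≥ 2 : p ≤ a - 1
              have h1 : (p:ℤ) ≤ a - 1 := Int.le_of_dvd (by omega) hpa
              apply ineqV2 hp3
              rw [hb, hy, hkk]
              simp only [Nat.sub_self, pow_zero, pow_one]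
              rw [abs_of_nonneg (by omega : (0:ℤ) ≤ a)]
              omega
            · -- a ≤ -2
              have hale : a ≤ -2 := by
                rcases abs_cases a with ⟨h1, _⟩ | ⟨h1, _⟩ <;> omega
              rcases eq_or_ne a (-2) with ha2 | ha2
              · -- p = 3, m = 3 : excluded
                exfalso
                have h1 : (p:ℤ) ∣ 3 := by
                  rw [ha2] at hpa
                  obtain ⟨c, hc⟩ := hpa
                  exact ⟨-c, by rw [mul_neg, ← hc]; norm_num⟩
                have h2 : p ∣ 3 := by exact_mod_cast h1
                have h3 : p = 3 := (Nat.prime_dvd_prime_iff_eq hp Nat.prime_three).mp h2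
                exact hex3 ⟨ha2, by omega⟩
              · -- a ≤ -3
                have ha3 : 3 ≤ |a| := by
                  rcases abs_cases a with ⟨h1, _⟩ | ⟨h1, _⟩ <;> omega
                have h1 : (p:ℤ) ≤ |a - 1| := Int.le_of_dvd (by rcases abs_cases (a-1) with ⟨h,_⟩|⟨h,_⟩ <;> omega) ((dvd_abs _ _).mpr hpa)
                have h2 : |a - 1| = |a| + 1 := by
                  rcases abs_cases a with ⟨hh, _⟩ | ⟨hh, _⟩ <;>
                    rcases abs_cases (a-1) with ⟨hh2, _⟩ | ⟨hh2, _⟩ <;> omega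
                apply ineqV3 hp3
                · rw [hb, hy, hkk]; simpa using ha3
                · rw [hb, hy, hkk]
                  simp only [Nat.sub_self, pow_zero, pow_one]
                  omega
          · exact ineqV2 hp3 (hbig hk2 hp3)
      · -- t = 2 : p odd, p ∣ a + 1
        have hp3 : 3 ≤ p := by
          have h2 := hp.two_le
          rcases eq_or_ne p 2 with h | h
          · exfalso; rw [h] at htp1; simp at htp1
          · omega
        have hx2 := hxp2 rfl
        have hpa : (p:ℤ) ∣ a + 1 := by
          have : ((a + 1 : ℤ) : ZMod p) = 0 := by push_cast; rw [hx2]; ring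
          exact (ZMod.intCast_zmod_eq_zero_iff_dvd _ p).mp this
        rcases lt_or_ge k 2 with hklt | hk2
        · have hkk : k = 1 := by omega
          have hmp : m = 2 * p := by rw [← hmt, hkk]; ring
          rcases le_or_gt 2 a with hage | halt
          · rcases eq_or_ne a 2 with ha2 | ha2
            · -- p = 3, m = 6 excluded
              exfalso
              have h1 : (p:ℤ) ∣ 3 := by rw [ha2] at hpa; exact_mod_cast hpa
              have h2 : p ∣ 3 := by exact_mod_cast h1
              have h3 : p = 3 := (Nat.prime_dvd_prime_iff_eq hp Nat.prime_three).mp h2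
              exact hex6 ⟨ha2, by omega⟩
            · -- a ≥ 3 : p ≤ a + 1
              have ha3 : 3 ≤ a := by omega
              have h1 : (p:ℤ) ≤ a + 1 := Int.le_of_dvd (by omega) hpa
              apply ineqV3 hp3
              · rw [hb, hy, hkk]
                simp only [Nat.sub_self, pow_zero, pow_one]
                rw [abs_of_nonneg (by omega : (0:ℤ) ≤ a)]
                omega
              · rw [hb, hy, hkk]
                simp only [Nat.sub_self, pow_zero, pow_one]
                rw [abs_of_nonneg (by omega : (0:ℤ) ≤ a)]
                omega
          · -- a ≤ -2 : p ≤ |a| - 1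
            have hale : a ≤ -2 := by
              rcases abs_cases a with ⟨h1, _⟩ | ⟨h1, _⟩ <;> omega
            have h1 : (p:ℤ) ≤ |a + 1| := Int.le_of_dvd (by rcases abs_cases (a+1) with ⟨h,_⟩|⟨h,_⟩ <;> omega) ((dvd_abs _ _).mpr hpa)
            have h2 : |a + 1| = |a| - 1 := by
              rcases abs_cases a with ⟨hh, _⟩ | ⟨hh, _⟩ <;>
                rcases abs_cases (a+1) with ⟨hh2, _⟩ | ⟨hh2, _⟩ <;> omega
            apply ineqV2 hp3
            rw [hb, hy, hkk]
            simp only [Nat.sub_self, pow_zero, pow_one]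
            omega
        · exact ineqV2 hp3 (hbig hk2 hp3)
    -- conclude for small t
    obtain ⟨hEle, hFge⟩ := hEF
    have hppos : (0:ℤ) < (p:ℤ) := by exact_mod_cast hp.pos
    calc (p:ℤ) * |E| ≤ (p:ℤ) * (b + 1) := by
          exact mul_le_mul_of_nonneg_left hEle (le_of_lt hppos)
      _ < b ^ p - 1 := by linarith [hV]
      _ ≤ |F| := hFge
  · -- t ≥ 3 : real estimates
    have hp5 : 5 ≤ p := by
      have h4 : p ≠ 4 := by
        intro h
        rw [h] at hp
        norm_num at hp
      omega
    have hV := ineqV4 hyabs hp5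
    -- to reals
    have hR : ∀ u v : ℤ, ((u:ℝ) < (v:ℝ)) → u < v := fun u v h => by exact_mod_cast h
    apply hR
    push_cast [Int.cast_abs]
    have hup := cyclo_abs_upper (t := t) ht3 (y := y)
    have hlow := cyclo_abs_lower (t := t) ht3 hypabs
    have hbcast : |(y:ℝ)| = ((b:ℤ):ℝ) := by rw [hb, Int.cast_abs]
    have hBpos : (0:ℝ) ≤ ((b:ℤ):ℝ) + 1 := by
      have : (2:ℝ) ≤ ((b:ℤ):ℝ) := by exact_mod_cast hyabs
      linarith
    have hppos : (1:ℝ) ≤ (p:ℝ) := by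
      have := hp.pos; exact_mod_cast this
    have hφ : t.totient ≠ 0 := (Nat.totient_pos.mpr ht0).ne'
    have hVR : (p:ℝ) * (((b:ℤ):ℝ) + 1) + 1 ≤ ((b:ℤ):ℝ) ^ p := by exact_mod_cast hV.le
    calc (p:ℝ) * |((E:ℤ):ℝ)|
        ≤ (p:ℝ) * (((b:ℤ):ℝ) + 1) ^ t.totient := by
          apply mul_le_mul_of_nonneg_left _ (by linarith)
          rw [← hbcast]
          exact hup
      _ ≤ (p:ℝ) ^ t.totient * (((b:ℤ):ℝ) + 1) ^ t.totient := by
          apply mul_le_mul_of_nonneg_right (le_self_pow₀ hppos hφ) (by positivity)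
      _ = ((p:ℝ) * (((b:ℤ):ℝ) + 1)) ^ t.totient := by rw [mul_pow]
      _ ≤ (((b:ℤ):ℝ) ^ p - 1) ^ t.totient := by
          apply pow_le_pow_left₀ (by positivity)
          linarith
      _ = (|((y:ℝ)) ^ p| - 1) ^ t.totient := by
          congr 2
          rw [abs_pow, hbcast]
      _ = (|(((y ^ p : ℤ)):ℝ)| - 1) ^ t.totient := by push_cast; ring_nf
      _ < |((F:ℤ):ℝ)| := hlow


end AuxStmt17

/-- Let `g ∈ ℤ[X]` be a nonconstant monic polynomial with an integer root
`a`, `|a| ≥ 2`, and let `m ≥ 2` be an integer such that `(a, m)` is not of the form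
`(±2^v − 1, 2)` with `v ≥ 1`, nor `(−2, 3)`, nor `(2, 6)`. Then there exist a prime `p`
and an integer linear recurrence with characteristic polynomial `g` (writing
`g(X) = X^r − c₁X^{r−1} − ⋯ − c_r`, so `s_{n+r} = ∑_{i<r} (−coeff_i g)·s_{n+i}`)
taking exactly `m` distinct residues modulo `p`. -/
theorem stmt17 (g : Polynomial ℤ) (hg : g.Monic) (hdeg : 0 < g.natDegree)
    (a : ℤ) (ha : g.eval a = 0) (ha2 : 2 ≤ |a|)
    (m : ℕ) (hm : 2 ≤ m)
    (hex2 : ¬ (m = 2 ∧ ∃ v : ℕ, 1 ≤ v ∧ (a = 2 ^ v - 1 ∨ a = -(2 ^ v) - 1)))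
    (hex3 : ¬ (a = -2 ∧ m = 3)) (hex6 : ¬ (a = 2 ∧ m = 6)) :
    ∃ p : ℕ, p.Prime ∧ ∃ s : ℕ → ℤ,
      (∀ n : ℕ, s (n + g.natDegree) =
        ∑ i ∈ Finset.range g.natDegree, (-(g.coeff i)) * s (n + i)) ∧
      (Set.range fun n : ℕ => ((s n : ZMod p))).ncard = m := by

  -- the sequence a^n satisfies the recurrence
  have hrec : ∀ n : ℕ, a ^ (n + g.natDegree) =
      ∑ i ∈ Finset.range g.natDegree, (-(g.coeff i)) * a ^ (n + i) := by
    intro n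
    have hev := eval_eq_sum_range (p := g) a
    rw [Finset.sum_range_succ, hg.coeff_natDegree, one_mul, ha] at hev
    have hsum : ∑ i ∈ Finset.range g.natDegree, g.coeff i * a ^ i = - a ^ g.natDegree := by
      linarith [hev.symm]
    calc a ^ (n + g.natDegree)
        = a ^ n * a ^ g.natDegree := pow_add a n g.natDegree
      _ = a ^ n * (- ∑ i ∈ Finset.range g.natDegree, g.coeff i * a ^ i) := by rw [hsum]; ring
      _ = ∑ i ∈ Finset.range g.natDegree, a ^ n * (-(g.coeff i * a ^ i)) := by
          rw [← Finset.sum_neg_distrib, Finset.mul_sum]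
      _ = ∑ i ∈ Finset.range g.natDegree, (-(g.coeff i)) * a ^ (n + i) :=
          Finset.sum_congr rfl (fun i _ => by rw [pow_add]; ring)
  rcases eq_or_lt_of_le hm with hm2 | hm3
  · -- m = 2 : take p ∣ a
    have ha2n : 2 ≤ a.natAbs := by
      rw [Int.abs_eq_natAbs] at ha2; exact_mod_cast ha2
    set p := a.natAbs.minFac with hpdef
    have hp : p.Prime := Nat.minFac_prime (by omega)
    haveI : Fact p.Prime := ⟨hp⟩
    have hpa : (p:ℤ) ∣ a :=
      (Int.natCast_dvd_natCast.mpr (Nat.minFac_dvd _)).trans (Int.natAbs_dvd.mpr dvd_rfl)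
    refine ⟨p, hp, fun n => a ^ n, fun n => hrec n, ?_⟩
    have hx0 : ((a : ZMod p)) = 0 := (ZMod.intCast_zmod_eq_zero_iff_dvd a p).mpr hpa
    have hset : (Set.range fun n : ℕ => (((a ^ n : ℤ) : ZMod p))) = {1, 0} := by
      ext z
      simp only [Set.mem_range, Set.mem_insert_iff, Set.mem_singleton_iff]
      constructor
      · rintro ⟨n, rfl⟩
        push_cast
        rw [hx0]
        cases n with
        | zero => left; simp
        | succ u => right; simp [zero_pow]
      · rintro (rfl | rfl)
        · exact ⟨0, by push_cast; simp⟩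
        · exact ⟨1, by push_cast; rw [hx0]; simp⟩
    rw [hset, Set.ncard_pair (one_ne_zero : (1 : ZMod p) ≠ 0), ← hm2]
  · -- m ≥ 3
    obtain ⟨p, hp, hpm, hpD⟩ := key_exists a ha2 m (by omega) hex3 hex6
    haveI : Fact p.Prime := ⟨hp⟩
    haveI : NeZero ((m : ZMod p)) := ⟨by
      rw [Ne, ZMod.natCast_eq_zero_iff]; exact hpm⟩
    have hroot : (cyclotomic m (ZMod p)).IsRoot ((a : ZMod p)) := by
      have h1 := eval_intCast_map (Int.castRingHom (ZMod p)) (cyclotomic m ℤ) a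
      rw [map_cyclotomic_int] at h1
      rw [IsRoot.def]
      rw [show ((a : ZMod p)) = ((a : ℤ) : ZMod p) by simp] at h1 ⊢
      rw [h1]
      exact (ZMod.intCast_zmod_eq_zero_iff_dvd _ p).mpr hpD
    have hprim : IsPrimitiveRoot ((a : ZMod p)) m := (isRoot_cyclotomic_iff).mp hroot
    have hord : orderOf ((a : ZMod p)) = m := hprim.eq_orderOf.symm
    refine ⟨p, hp, fun n => a ^ n, fun n => hrec n, ?_⟩
    have hxcast : (fun n : ℕ => (((a ^ n : ℤ) : ZMod p))) = fun n => ((a : ZMod p)) ^ n := by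
      funext n; push_cast; rfl
    rw [hxcast]
    have hm0 : 0 < m := by omega
    have hrange : Set.range (fun n : ℕ => ((a : ZMod p)) ^ n)
        = ↑((Finset.range m).image (fun i => ((a : ZMod p)) ^ i)) := by
      ext z
      simp only [Set.mem_range, Finset.coe_image, Set.mem_image, Finset.mem_coe,
        Finset.mem_range]
      constructor
      · rintro ⟨n, rfl⟩
        refine ⟨n % m, Nat.mod_lt _ hm0, ?_⟩
        rw [← hord]
        exact pow_mod_orderOf _ _
      · rintro ⟨i, _, rfl⟩
        exact ⟨i, rfl⟩
    rw [hrange, Set.ncard_coe_finset]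
    rw [Finset.card_image_of_injOn, Finset.card_range]
    intro i hi j hj hij
    have hi' : i ∈ Set.Iio (orderOf ((a : ZMod p))) := by
      rw [hord]; exact Finset.mem_range.mp (Finset.mem_coe.mp hi)
    have hj' : j ∈ Set.Iio (orderOf ((a : ZMod p))) := by
      rw [hord]; exact Finset.mem_range.mp (Finset.mem_coe.mp hj)
    exact pow_injOn_Iio_orderOf hi' hj' hij
end
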